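/- arXiv:math/9909186 — 5 statements merged into one kernel-verified Lean document; each statement's English description precedes it below -/
import Mathlib

section
/- Let 0 → C_0 →^{d_0} C_1 → ⋯ →^{d_{2N}} C_{2N+1} → 0 be an acyclic cochain complex of finite-dimensional complex inner product spaces. Define the dual complex by C^♯_j := C_{2N+1−j} and d^♯_j := (d_{2N−j})^* for 0 ≤ j ≤ 2N. Then (C^♯, d^♯) is again an acyclic cochain complex of finite-dimensional complex inner product spaces, and T(C^♯) = T(C). -/
noncomputable section

open LinearMap

/-- A cochain complex of finite-dimensional complex inner product spaces,
supported in degrees `0, …, N` (the spaces in degrees `> N` are trivial). -/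
structure FinComplex (N : ℕ) where
  /-- the spaces of the complex -/
  C : ℕ → Type
  [normed : ∀ q, NormedAddCommGroup (C q)]
  [ipspace : ∀ q, InnerProductSpace ℂ (C q)]
  [findim : ∀ q, FiniteDimensional ℂ (C q)]
  /-- the differentials -/
  d : ∀ q, C q →ₗ[ℂ] C (q + 1)
  dd : ∀ q, (d (q + 1)).comp (d q) = 0
  trivial_beyond : ∀ q, N < q → ∀ x : C q, x = 0

attribute [instance] FinComplex.normed FinComplex.ipspace FinComplex.findim

namespace FinComplex

variable {N : ℕ}

/-- The Laplacians `Δ_q = d_q^* d_q + d_{q-1} d_{q-1}^*` (no second term for `q = 0`). -/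
def lap (X : FinComplex N) : ∀ q, X.C q →ₗ[ℂ] X.C q
  | 0 => (LinearMap.adjoint (X.d 0)).comp (X.d 0)
  | (q + 1) =>
      (LinearMap.adjoint (X.d (q + 1))).comp (X.d (q + 1)) +
        (X.d q).comp (LinearMap.adjoint (X.d q))

/-- Acyclicity: `ker d_q = range d_{q-1}` for every `q` (for `q = 0` this reads `ker d_0 = 0`). -/
def Acyclic (X : FinComplex N) : Prop :=
  LinearMap.ker (X.d 0) = ⊥ ∧
    ∀ q, LinearMap.ker (X.d (q + 1)) = LinearMap.range (X.d q)

/-- `log T(C) = (1/2) * Σ_q (-1)^(q+1) * q * log det Δ_q`. -/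
def logT (X : FinComplex N) : ℝ :=
  (1 / 2) * ∑ q ∈ Finset.range (N + 1),
      (-1 : ℝ) ^ (q + 1) * (q : ℝ) * Real.log ((LinearMap.det (X.lap q)).re)

/-- Morphism of cochain complexes. -/
def IsMorphism (X Y : FinComplex N) (f : ∀ q, X.C q →ₗ[ℂ] Y.C q) : Prop :=
  ∀ q x, f (q + 1) (X.d q x) = Y.d q (f q x)

/-- `f` induces an isomorphism in cohomology
(`ker d_q / range d_{q-1} → ker d'_q / range d'_{q-1}` is bijective for all `q`). -/
def InducesCohomologyIso (X Y : FinComplex N) (f : ∀ q, X.C q →ₗ[ℂ] Y.C q) : Prop :=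
  (∀ x : X.C 0, X.d 0 x = 0 → f 0 x = 0 → x = 0) ∧
  (∀ y : Y.C 0, Y.d 0 y = 0 → ∃ x : X.C 0, X.d 0 x = 0 ∧ f 0 x = y) ∧
  (∀ q, ∀ x : X.C (q + 1), X.d (q + 1) x = 0 →
      (∃ v, Y.d q v = f (q + 1) x) → ∃ u, X.d q u = x) ∧
  (∀ q, ∀ y : Y.C (q + 1), Y.d (q + 1) y = 0 →
      ∃ x : X.C (q + 1), X.d (q + 1) x = 0 ∧ ∃ v, y - f (q + 1) x = Y.d q v)

/-- Data identifying `Z` with the mapping cone of `f : X → Y`: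
`Z_k = Y_{k-1} ⊕ X_k` (orthogonal direct sum) with differential
`d(f)_k (v, u) = (-d_Y v + f u, d_X u)`. -/
structure ConeIso (X Y : FinComplex N) (f : ∀ q, X.C q →ₗ[ℂ] Y.C q)
    (Z : FinComplex (N + 1)) where
  e0 : X.C 0 ≃ₗᵢ[ℂ] Z.C 0
  e : ∀ q, WithLp 2 (Y.C q × X.C (q + 1)) ≃ₗᵢ[ℂ] Z.C (q + 1)
  compat0 : ∀ u : X.C 0,
    Z.d 0 (e0 u) = e 0 ((WithLp.equiv 2 (Y.C 0 × X.C 1)).symm (f 0 u, X.d 0 u))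
  compat : ∀ q (v : Y.C q) (u : X.C (q + 1)),
    Z.d (q + 1) (e q ((WithLp.equiv 2 (Y.C q × X.C (q + 1))).symm (v, u))) =
      e (q + 1) ((WithLp.equiv 2 (Y.C (q + 1) × X.C (q + 2))).symm
        (-(Y.d q v) + f (q + 1) u, X.d (q + 1) u))

end FinComplex

/-- `log vol(g) = (1/2) log det (g^* g)` for a linear map between finite-dimensional
complex inner product spaces. -/
def logvol {E F : Type} [NormedAddCommGroup E] [InnerProductSpace ℂ E] [FiniteDimensional ℂ E]
    [NormedAddCommGroup F] [InnerProductSpace ℂ F] [FiniteDimensional ℂ F]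
    (g : E →ₗ[ℂ] F) : ℝ :=
  (1 / 2) * Real.log ((LinearMap.det ((LinearMap.adjoint g).comp g)).re)


section AuxIP
variable {E F G : Type} [NormedAddCommGroup E] [InnerProductSpace ℂ E] [FiniteDimensional ℂ E]
  [NormedAddCommGroup F] [InnerProductSpace ℂ F] [FiniteDimensional ℂ F]
  [NormedAddCommGroup G] [InnerProductSpace ℂ G] [FiniteDimensional ℂ G]

local notation "⟪" x ", " y "⟫" => @inner ℂ _ _ x y

lemma my_adjoint_iso (e : E ≃ₗᵢ[ℂ] F) :
    LinearMap.adjoint (e.toLinearEquiv : E →ₗ[ℂ] F) = (e.symm.toLinearEquiv : F →ₗ[ℂ] E) := by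
  symm
  rw [LinearMap.eq_adjoint_iff]
  intro x y
  show ⟪e.symm x, y⟫ = ⟪x, e y⟫
  rw [← e.inner_map_map (e.symm x) y, e.apply_symm_apply]

lemma my_det_prodMap (f : E →ₗ[ℂ] E) (g : F →ₗ[ℂ] F) :
    LinearMap.det (f.prodMap g) = LinearMap.det f * LinearMap.det g := by
  classical
  let b₁ := Module.finBasis ℂ E
  let b₂ := Module.finBasis ℂ F
  rw [← LinearMap.det_toMatrix (b₁.prod b₂), LinearMap.toMatrix_prodMap,
    Matrix.det_fromBlocks_zero₂₁, LinearMap.det_toMatrix, LinearMap.det_toMatrix]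

lemma my_det_conj_symm (e : E ≃ₗ[ℂ] F) (f : F →ₗ[ℂ] F) :
    LinearMap.det ((e.symm : F →ₗ[ℂ] E) ∘ₗ f ∘ₗ (e : E →ₗ[ℂ] F)) = LinearMap.det f := by
  simpa using LinearMap.det_conj f e.symm

lemma my_det_orth_split (T : E →ₗ[ℂ] E) (K : Submodule ℂ E)
    (hK : ∀ x ∈ K, T x ∈ K) (hK' : ∀ x ∈ Kᗮ, T x ∈ Kᗮ) :
    LinearMap.det T =
      LinearMap.det (T.restrict hK) * LinearMap.det (T.restrict hK') := by
  have hc : IsCompl K Kᗮ := Submodule.isCompl_orthogonal_of_hasOrthogonalProjection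
  set e := Submodule.prodEquivOfIsCompl K Kᗮ hc with he_def
  have he : T ∘ₗ (e : K × Kᗮ →ₗ[ℂ] E) =
      (e : K × Kᗮ →ₗ[ℂ] E) ∘ₗ ((T.restrict hK).prodMap (T.restrict hK')) := by
    ext x
    · simp [e, Submodule.coe_prodEquivOfIsCompl']
    · simp [e, Submodule.coe_prodEquivOfIsCompl']
  have hT : T = ((e : K × Kᗮ →ₗ[ℂ] E) ∘ₗ ((T.restrict hK).prodMap (T.restrict hK'))) ∘ₗ
      (e.symm : E →ₗ[ℂ] K × Kᗮ) := by
    rw [← he]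
    ext x
    simp
  conv_lhs => rw [hT]
  rw [LinearMap.comp_assoc, LinearMap.det_conj, my_det_prodMap]

lemma my_det_one_of_trivial {f : E →ₗ[ℂ] E} (h : ∀ x : E, x = 0) :
    LinearMap.det f = 1 := by
  have : f = LinearMap.id := by ext x; rw [h x]; simp
  rw [this, LinearMap.det_id]

lemma my_ker_adjoint (A : E →ₗ[ℂ] F) :
    LinearMap.ker (LinearMap.adjoint A) = (LinearMap.range A)ᗮ := by
  ext x
  simp only [LinearMap.mem_ker, Submodule.mem_orthogonal]
  constructor
  · rintro h u ⟨z, rfl⟩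
    rw [← LinearMap.adjoint_inner_right, h, inner_zero_right]
  · intro h
    refine ext_inner_right ℂ fun v => ?_
    rw [LinearMap.adjoint_inner_left, inner_zero_left]
    exact inner_eq_zero_symm.mp (h (A v) ⟨v, rfl⟩)

lemma my_range_adjoint (A : E →ₗ[ℂ] F) :
    LinearMap.range (LinearMap.adjoint A) = (LinearMap.ker A)ᗮ := by
  have h1 : LinearMap.ker A = (LinearMap.range (LinearMap.adjoint A))ᗮ := by
    rw [← my_ker_adjoint (LinearMap.adjoint A), LinearMap.adjoint_adjoint]
  rw [h1, Submodule.orthogonal_orthogonal]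

end AuxIP
section AuxIP2
variable {E F P Q : Type} [NormedAddCommGroup E] [InnerProductSpace ℂ E] [FiniteDimensional ℂ E]
  [NormedAddCommGroup F] [InnerProductSpace ℂ F] [FiniteDimensional ℂ F]
  [NormedAddCommGroup P] [InnerProductSpace ℂ P] [FiniteDimensional ℂ P]
  [NormedAddCommGroup Q] [InnerProductSpace ℂ Q] [FiniteDimensional ℂ Q]

local notation "⟪" x ", " y "⟫" => @inner ℂ _ _ x y

lemma my_det_adjoint (f : E →ₗ[ℂ] E) :
    LinearMap.det (LinearMap.adjoint f) = starRingEnd ℂ (LinearMap.det f) := by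
  let v := stdOrthonormalBasis ℂ E
  rw [← LinearMap.det_toMatrix v.toBasis f, ← LinearMap.det_toMatrix v.toBasis,
    LinearMap.toMatrix_adjoint, Matrix.det_conjTranspose]
  rfl

variable (u : P ≃ₗᵢ[ℂ] E) (v : Q ≃ₗᵢ[ℂ] F) (C : E →ₗ[ℂ] F) (B : P →ₗ[ℂ] Q)

lemma my_adjoint_transfer (h : ∀ x, v (B x) = C (u x)) (y : Q) :
    u (LinearMap.adjoint B y) = LinearMap.adjoint C (v y) := by
  apply ext_inner_right ℂ
  intro z
  obtain ⟨w, rfl⟩ := u.surjective z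
  rw [u.inner_map_map, LinearMap.adjoint_inner_left, LinearMap.adjoint_inner_left, ← h w,
    v.inner_map_map]

lemma my_ata_transfer (h : ∀ x, v (B x) = C (u x)) :
    LinearMap.adjoint B ∘ₗ B =
      (u.symm.toLinearEquiv : E →ₗ[ℂ] P) ∘ₗ (LinearMap.adjoint C ∘ₗ C) ∘ₗ
        (u.toLinearEquiv : P →ₗ[ℂ] E) := by
  ext x
  show LinearMap.adjoint B (B x) = u.symm (LinearMap.adjoint C (C (u x)))
  rw [← h x, ← my_adjoint_transfer u v C B h (B x), u.symm_apply_apply]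

lemma my_aat_transfer (h : ∀ x, v (B x) = C (u x)) :
    B ∘ₗ LinearMap.adjoint B =
      (v.symm.toLinearEquiv : F →ₗ[ℂ] Q) ∘ₗ (C ∘ₗ LinearMap.adjoint C) ∘ₗ
        (v.toLinearEquiv : Q →ₗ[ℂ] F) := by
  ext y
  show B (LinearMap.adjoint B y) = v.symm (C (LinearMap.adjoint C (v y)))
  have h1 := my_adjoint_transfer u v C B h y
  have h2 := h (LinearMap.adjoint B y)
  rw [h1] at h2
  rw [← h2, v.symm_apply_apply]

lemma my_ker_transfer (h : ∀ x, v (B x) = C (u x)) :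
    LinearMap.ker B = Submodule.comap (u.toLinearEquiv : P →ₗ[ℂ] E) (LinearMap.ker C) := by
  ext x
  simp only [LinearMap.mem_ker, Submodule.mem_comap]
  constructor
  · intro hx
    show C (u x) = 0
    rw [← h x, hx, map_zero]
  · intro hx
    apply v.injective
    rw [h x, map_zero]
    exact hx

lemma my_range_transfer (h : ∀ x, v (B x) = C (u x)) :
    LinearMap.range B = Submodule.comap (v.toLinearEquiv : Q →ₗ[ℂ] F) (LinearMap.range C) := by
  ext y
  simp only [LinearMap.mem_range, Submodule.mem_comap]
  constructor
  · rintro ⟨x, rfl⟩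
    exact ⟨u x, (h x).symm⟩
  · rintro ⟨z, hz⟩
    obtain ⟨w, rfl⟩ := u.surjective z
    refine ⟨w, v.injective ?_⟩
    rw [h w]
    exact hz

lemma my_det_transfer (u : P ≃ₗᵢ[ℂ] E) (f : E →ₗ[ℂ] E) :
    LinearMap.det ((u.symm.toLinearEquiv : E →ₗ[ℂ] P) ∘ₗ f ∘ₗ
      (u.toLinearEquiv : P →ₗ[ℂ] E)) = LinearMap.det f := by
  exact my_det_conj_symm u.toLinearEquiv f

lemma my_conj_add (u : P ≃ₗᵢ[ℂ] E) (f g : E →ₗ[ℂ] E) :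
    (u.symm.toLinearEquiv : E →ₗ[ℂ] P) ∘ₗ f ∘ₗ (u.toLinearEquiv : P →ₗ[ℂ] E) +
      (u.symm.toLinearEquiv : E →ₗ[ℂ] P) ∘ₗ g ∘ₗ (u.toLinearEquiv : P →ₗ[ℂ] E) =
      (u.symm.toLinearEquiv : E →ₗ[ℂ] P) ∘ₗ (f + g) ∘ₗ (u.toLinearEquiv : P →ₗ[ℂ] E) := by
  rw [LinearMap.add_comp, LinearMap.comp_add]

lemma my_adjoint_zero : LinearMap.adjoint (0 : E →ₗ[ℂ] F) = 0 := by
  symm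
  rw [LinearMap.eq_adjoint_iff]
  intro x y
  simp

end AuxIP2
namespace FinComplex

variable {N : ℕ}

local notation "⟪" x ", " y "⟫" => @inner ℂ _ _ x y

lemma d_last (X : FinComplex N) {q : ℕ} (hq : N ≤ q) : X.d q = 0 := by
  ext x
  exact X.trivial_beyond (q + 1) (by omega) _

lemma lap_zero_def (X : FinComplex N) :
    X.lap 0 = (LinearMap.adjoint (X.d 0)).comp (X.d 0) := rfl

lemma lap_succ_def (X : FinComplex N) (q : ℕ) :
    X.lap (q + 1) =
      (LinearMap.adjoint (X.d (q + 1))).comp (X.d (q + 1)) +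
        (X.d q).comp (LinearMap.adjoint (X.d q)) := rfl

lemma orth_invariant (X : FinComplex N) (q : ℕ) (x : X.C q) :
    LinearMap.adjoint (X.d q) (X.d q x) ∈ (LinearMap.ker (X.d q))ᗮ := by
  rw [Submodule.mem_orthogonal]
  intro u hu
  rw [LinearMap.adjoint_inner_right, LinearMap.mem_ker.mp hu, inner_zero_left]

/-- The restriction of `d_q^* d_q` to `(ker d_q)ᗮ`. -/
def Tq (X : FinComplex N) (q : ℕ) :
    ↥(LinearMap.ker (X.d q))ᗮ →ₗ[ℂ] ↥(LinearMap.ker (X.d q))ᗮ :=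
  (LinearMap.adjoint (X.d q) ∘ₗ X.d q).restrict (fun x _ => X.orth_invariant q x)

/-- The partial determinant `β_q`. -/
def beta (X : FinComplex N) (q : ℕ) : ℂ := LinearMap.det (X.Tq q)

lemma Tq_coe (X : FinComplex N) (q : ℕ) (x : ↥(LinearMap.ker (X.d q))ᗮ) :
    (X.Tq q x : X.C q) = LinearMap.adjoint (X.d q) (X.d q (x : X.C q)) := rfl

lemma beta_conj (X : FinComplex N) (q : ℕ) : starRingEnd ℂ (X.beta q) = X.beta q := by
  have hadj : X.Tq q = LinearMap.adjoint (X.Tq q) := by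
    rw [LinearMap.eq_adjoint_iff]
    intro x y
    rw [Submodule.coe_inner, Submodule.coe_inner, Tq_coe, Tq_coe,
      LinearMap.adjoint_inner_left, LinearMap.adjoint_inner_right]
  calc starRingEnd ℂ (X.beta q) = LinearMap.det (LinearMap.adjoint (X.Tq q)) :=
        (my_det_adjoint _).symm
    _ = X.beta q := by rw [← hadj]; rfl

lemma beta_real (X : FinComplex N) (q : ℕ) : X.beta q = ((X.beta q).re : ℂ) := by
  have := X.beta_conj q
  apply Complex.ext
  · simp
  · have h2 : (X.beta q).im = - (X.beta q).im := by
      conv_lhs => rw [← this]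
      simp [Complex.conj_im]
    simp only [Complex.ofReal_im]
    linarith
lemma beta_ne_zero (X : FinComplex N) (q : ℕ) : X.beta q ≠ 0 := by
  intro h0
  have hker := LinearMap.bot_lt_ker_of_det_eq_zero h0
  obtain ⟨x, hx, hx0⟩ := SetLike.exists_of_lt hker
  apply hx0
  have hdx : X.d q (x : X.C q) = 0 := by
    have h1 : ⟪X.d q (x : X.C q), X.d q (x : X.C q)⟫ = 0 := by
      rw [← LinearMap.adjoint_inner_right]
      have : (X.Tq q x : X.C q) = 0 := by rw [LinearMap.mem_ker.mp hx]; rfl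
      rw [Tq_coe] at this
      rw [this, inner_zero_right]
    exact inner_self_eq_zero.mp h1
  have hmem : (x : X.C q) ∈ LinearMap.ker (X.d q) := LinearMap.mem_ker.mpr hdx
  have horth := x.2
  rw [Submodule.mem_orthogonal] at horth
  have := horth _ hmem
  have hxz : (x : X.C q) = 0 := by
    have : ⟪(x : X.C q), (x : X.C q)⟫ = 0 := this
    exact inner_self_eq_zero.mp this
  exact Subtype.ext hxz

lemma beta_re_ne_zero (X : FinComplex N) (q : ℕ) : (X.beta q).re ≠ 0 := by
  intro h
  apply X.beta_ne_zero q
  rw [X.beta_real q, h, Complex.ofReal_zero]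

lemma beta_last (X : FinComplex N) : X.beta N = 1 := by
  have hdN : X.d N = 0 := X.d_last le_rfl
  have hker : LinearMap.ker (X.d N) = ⊤ := by rw [hdN]; exact LinearMap.ker_zero
  apply my_det_one_of_trivial
  intro x
  have horth := x.2
  rw [Submodule.mem_orthogonal] at horth
  have hx0 : (x : X.C N) ∈ LinearMap.ker (X.d N) := by
    rw [LinearMap.mem_ker]
    exact (DFunLike.congr_fun hdN ((x : X.C N))).trans rfl
  have := horth (x : X.C N) hx0
  exact Subtype.ext (inner_self_eq_zero.mp this)

lemma det_lap_zero (X : FinComplex N) (hX : X.Acyclic) :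
    LinearMap.det (X.lap 0) = X.beta 0 := by
  set K := LinearMap.ker (X.d 0) with hK_def
  have hK : ∀ x ∈ K, X.lap 0 x ∈ K := by
    intro x hx
    rw [lap_zero_def, LinearMap.comp_apply, LinearMap.mem_ker.mp hx, map_zero]
    exact K.zero_mem
  have hK' : ∀ x ∈ Kᗮ, X.lap 0 x ∈ Kᗮ := fun x _ => X.orth_invariant 0 x
  have hsplit := my_det_orth_split (X.lap 0) K hK hK'
  have h1 : LinearMap.det ((X.lap 0).restrict hK) = 1 := by
    apply my_det_one_of_trivial
    intro x
    have : (x : X.C 0) ∈ (⊥ : Submodule ℂ (X.C 0)) := by rw [← hX.1]; exact x.2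
    exact Subtype.ext this
  have h2 : (X.lap 0).restrict hK' = X.Tq 0 := rfl
  rw [hsplit, h1, h2, one_mul]
  rfl

lemma det_lap_succ (X : FinComplex N) (hX : X.Acyclic) (q : ℕ) :
    LinearMap.det (X.lap (q + 1)) = X.beta q * X.beta (q + 1) := by
  set K := LinearMap.ker (X.d (q + 1)) with hK_def
  have hrange : LinearMap.range (X.d q) ≤ K := by
    rintro _ ⟨z, rfl⟩
    rw [hK_def, LinearMap.mem_ker, ← LinearMap.comp_apply, X.dd q, LinearMap.zero_apply]
  -- the Laplacian preserves K
  have hK : ∀ x ∈ K, X.lap (q + 1) x ∈ K := by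
    intro x hx
    rw [lap_succ_def, LinearMap.add_apply, LinearMap.comp_apply, LinearMap.comp_apply,
      LinearMap.mem_ker.mp hx, map_zero, zero_add]
    exact hrange ⟨_, rfl⟩
  -- on Kᗮ the second summand vanishes
  have hadj_zero : ∀ x ∈ Kᗮ, LinearMap.adjoint (X.d q) x = 0 := by
    intro x hx
    apply ext_inner_right ℂ
    intro z
    rw [LinearMap.adjoint_inner_left, inner_zero_left]
    rw [Submodule.mem_orthogonal'] at hx
    exact hx _ (hrange ⟨z, rfl⟩)
  have hK' : ∀ x ∈ Kᗮ, X.lap (q + 1) x ∈ Kᗮ := by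
    intro x hx
    rw [lap_succ_def, LinearMap.add_apply, LinearMap.comp_apply, LinearMap.comp_apply,
      hadj_zero x hx, map_zero, add_zero]
    exact X.orth_invariant (q + 1) x
  have hsplit := my_det_orth_split (X.lap (q + 1)) K hK hK'
  -- identify the restriction to Kᗮ with Tq (q+1)
  have h2 : (X.lap (q + 1)).restrict hK' = X.Tq (q + 1) := by
    ext x
    rw [LinearMap.restrict_coe_apply, Tq_coe, lap_succ_def, LinearMap.add_apply,
      LinearMap.comp_apply, LinearMap.comp_apply, hadj_zero _ x.2, map_zero, add_zero]
  -- identify det of the restriction to K with beta q, via the iso (ker d_q)ᗮ ≃ K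
  have h1 : LinearMap.det ((X.lap (q + 1)).restrict hK) = X.beta q := by
    set K' := (LinearMap.ker (X.d q))ᗮ with hK'_def
    have hmem : ∀ c : K', X.d q (c : X.C q) ∈ K := fun c => hrange ⟨_, rfl⟩
    let φ₀ : K' →ₗ[ℂ] K := LinearMap.codRestrict K ((X.d q) ∘ₗ (Submodule.subtype K')) hmem
    have hφinj : Function.Injective φ₀ := by
      intro a b hab
      have h3 : X.d q ((a : X.C q) - b) = 0 := by
        have := congrArg (Subtype.val) hab
        simp only [φ₀, LinearMap.codRestrict_apply, LinearMap.comp_apply,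
          Submodule.coe_subtype] at this
        rw [map_sub, show X.d q (a : X.C q) = X.d q (b : X.C q) from this, sub_self]
      have hmemK : ((a : X.C q) - b) ∈ LinearMap.ker (X.d q) := LinearMap.mem_ker.mpr h3
      have hmemK' : ((a : X.C q) - b) ∈ K' := Submodule.sub_mem _ a.2 b.2
      rw [Submodule.mem_orthogonal] at hmemK'
      have := hmemK' _ hmemK
      have h0 : (a : X.C q) - b = 0 := inner_self_eq_zero.mp this
      exact Subtype.ext (by linear_combination (norm := module) h0)
    have hφsurj : Function.Surjective φ₀ := by
      rintro ⟨y, hy⟩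
      rw [hK_def, hX.2 q] at hy
      obtain ⟨z, rfl⟩ := hy
      have hc : IsCompl (LinearMap.ker (X.d q)) K' :=
        Submodule.isCompl_orthogonal_of_hasOrthogonalProjection
      have hz : z ∈ LinearMap.ker (X.d q) ⊔ K' := by rw [hc.sup_eq_top]; trivial
      obtain ⟨a, ha, b, hb, rfl⟩ := Submodule.mem_sup.mp hz
      refine ⟨⟨b, hb⟩, ?_⟩
      apply Subtype.ext
      simp only [φ₀, LinearMap.codRestrict_apply, LinearMap.comp_apply, Submodule.coe_subtype]
      rw [map_add, LinearMap.mem_ker.mp ha, zero_add]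
      rfl
    let φ : K' ≃ₗ[ℂ] K := LinearEquiv.ofBijective φ₀ ⟨hφinj, hφsurj⟩
    have key : ∀ x : K', (X.lap (q+1)).restrict hK (φ x) = φ (X.Tq q x) := by
      intro x
      apply Subtype.ext
      rw [LinearMap.restrict_coe_apply]
      show X.lap (q+1) (X.d q (x : X.C q)) = X.d q ((X.Tq q x : X.C q))
      rw [lap_succ_def, LinearMap.add_apply, LinearMap.comp_apply, LinearMap.comp_apply]
      have hz : X.d (q+1) (X.d q (x : X.C q)) = 0 := by
        rw [← LinearMap.comp_apply, X.dd q, LinearMap.zero_apply]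
      rw [hz, map_zero, zero_add, Tq_coe]
    have hconj : (φ.symm : K →ₗ[ℂ] K') ∘ₗ ((X.lap (q + 1)).restrict hK) ∘ₗ (φ : K' →ₗ[ℂ] K) =
        X.Tq q := by
      ext x
      refine congrArg Subtype.val ?_
      show φ.symm (((X.lap (q + 1)).restrict hK) (φ x)) = X.Tq q x
      rw [key x, φ.symm_apply_apply]
    calc LinearMap.det ((X.lap (q + 1)).restrict hK)
        = LinearMap.det ((φ.symm : K →ₗ[ℂ] K') ∘ₗ ((X.lap (q + 1)).restrict hK) ∘ₗ
            (φ : K' →ₗ[ℂ] K)) := (my_det_conj_symm φ _).symm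
      _ = X.beta q := by rw [hconj]; rfl
  rw [hsplit, h1, h2]
  rfl

/-- The key identity: for an acyclic complex the alternating product of the
determinants of the Laplacians is trivial. -/
lemma alt_sum_zero (X : FinComplex N) (hX : X.Acyclic) :
    ∑ q ∈ Finset.range (N + 1),
      (-1 : ℝ) ^ q * Real.log ((LinearMap.det (X.lap q)).re) = 0 := by
  set L : ℕ → ℝ := fun q => Real.log ((LinearMap.det (X.lap q)).re) with hL
  set G : ℕ → ℝ := fun q => Nat.casesOn q 0 (fun p => (-1 : ℝ) ^ p * Real.log ((X.beta p).re))
    with hG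
  have key : ∀ q, (-1 : ℝ) ^ q * L q = G (q + 1) - G q := by
    intro q
    match q with
    | 0 =>
      simp only [hL, hG, pow_zero, one_mul]
      rw [X.det_lap_zero hX]
      simp
    | (p + 1) =>
      have hdet := X.det_lap_succ hX p
      have hre : (LinearMap.det (X.lap (p + 1))).re = (X.beta p).re * (X.beta (p + 1)).re := by
        conv_lhs => rw [hdet, X.beta_real p, X.beta_real (p + 1), ← Complex.ofReal_mul,
          Complex.ofReal_re]
      simp only [hL, hG]
      rw [hre, Real.log_mul (X.beta_re_ne_zero p) (X.beta_re_ne_zero (p + 1))]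
      ring
  calc ∑ q ∈ Finset.range (N + 1), (-1 : ℝ) ^ q * L q
      = ∑ q ∈ Finset.range (N + 1), (G (q + 1) - G q) := by
        exact Finset.sum_congr rfl fun q _ => key q
    _ = G (N + 1) - G 0 := Finset.sum_range_sub G (N + 1)
    _ = 0 := by
        simp only [hG]
        rw [X.beta_last]
        simp

end FinComplex

open FinComplex in
/-- **Formula (1.22) of [BFK, "Relative torsion"]** (finite-dimensional case `𝒜 = ℂ`).
If `0 → C_0 → ⋯ → C_{2N+1} → 0` is an acyclic cochain complex of finite-dimensional
complex inner product spaces and `Y` is its dual complex, i.e. `Y_j = C_{2N+1-j}` with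
differential `d^♯_j = (d_{2N-j})^*`, then `Y` is again an acyclic cochain complex of
finite-dimensional complex inner product spaces and `T(Y) = T(X)`, i.e.
`log T(Y) = log T(X)`. -/
theorem torsion_dual_complex (n : ℕ) (X : FinComplex (2 * n + 1)) (hX : X.Acyclic)
    (Y : FinComplex (2 * n + 1))
    (e : ∀ j k : ℕ, j + k = 2 * n + 1 → (Y.C j ≃ₗᵢ[ℂ] X.C k))
    (he : ∀ (j k : ℕ) (h : j + (k + 1) = 2 * n + 1) (y : Y.C j),
      e (j + 1) k (by omega) (Y.d j y) = LinearMap.adjoint (X.d k) (e j (k + 1) h y)) :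
    Y.Acyclic ∧ Y.logT = X.logT := by
  have hMX : X.d (2 * n + 1) = 0 := X.d_last le_rfl
  have hMY : Y.d (2 * n + 1) = 0 := Y.d_last le_rfl
  have hker_topX : LinearMap.ker (X.d (2 * n + 1)) = ⊤ := by rw [hMX]; exact LinearMap.ker_zero
  -- Acyclicity of Y
  have hYac : Y.Acyclic := by
    constructor
    · have h := my_ker_transfer (e 0 (2 * n + 1) (by omega)) (e 1 (2 * n) (by omega))
        (LinearMap.adjoint (X.d (2 * n))) (Y.d 0) (fun y => he 0 (2 * n) (by omega) y)
      rw [h, my_ker_adjoint, ← hX.2 (2 * n), hker_topX, Submodule.top_orthogonal_eq_bot,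
        Submodule.comap_bot, LinearMap.ker_eq_bot]
      exact (e 0 (2 * n + 1) (by omega)).injective
    · intro q
      by_cases hq : q + 1 ≤ 2 * n
      · set k₀ := 2 * n - 1 - q with hk₀
        have hk1 : q + (k₀ + 1 + 1) = 2 * n + 1 := by omega
        have hk2 : (q + 1) + (k₀ + 1) = 2 * n + 1 := by omega
        have hker := my_ker_transfer (e (q + 1) (k₀ + 1) hk2) (e (q + 2) k₀ (by omega))
          (LinearMap.adjoint (X.d k₀)) (Y.d (q + 1)) (fun y => he (q + 1) k₀ (by omega) y)
        have hrange := my_range_transfer (e q (k₀ + 1 + 1) hk1) (e (q + 1) (k₀ + 1) hk2)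
          (LinearMap.adjoint (X.d (k₀ + 1))) (Y.d q) (fun y => he q (k₀ + 1) hk1 y)
        rw [hker, hrange, my_ker_adjoint, my_range_adjoint, hX.2 k₀]
      · by_cases hq2 : q = 2 * n
        · subst hq2
          have hkerY : LinearMap.ker (Y.d (2 * n + 1)) = ⊤ := by
            rw [hMY]; exact LinearMap.ker_zero
          have hrange := my_range_transfer (e (2 * n) 1 (by omega)) (e (2 * n + 1) 0 (by omega))
            (LinearMap.adjoint (X.d 0)) (Y.d (2 * n)) (fun y => he (2 * n) 0 (by omega) y)
          rw [hkerY, hrange, my_range_adjoint, hX.1, Submodule.bot_orthogonal_eq_top,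
            Submodule.comap_top]
        · ext x
          have hx : x = 0 := Y.trivial_beyond (q + 1) (by omega) x
          simp only [LinearMap.mem_ker, LinearMap.mem_range]
          constructor
          · intro _
            exact ⟨0, by rw [map_zero, hx]⟩
          · intro _
            exact Y.trivial_beyond (q + 2) (by omega) _
  -- determinants of the Laplacians match up
  have hdet : ∀ j, j ≤ 2 * n + 1 →
      LinearMap.det (Y.lap j) = LinearMap.det (X.lap (2 * n + 1 - j)) := by
    intro j hj
    cases j with
    | zero =>
      have h := my_ata_transfer (e 0 (2 * n + 1) (by omega)) (e 1 (2 * n) (by omega))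
        (LinearMap.adjoint (X.d (2 * n))) (Y.d 0) (fun y => he 0 (2 * n) (by omega) y)
      rw [Y.lap_zero_def, h, my_det_transfer]
      have hl : X.lap (2 * n + 1) =
          LinearMap.adjoint (LinearMap.adjoint (X.d (2 * n))) ∘ₗ
            LinearMap.adjoint (X.d (2 * n)) := by
        rw [X.lap_succ_def (2 * n), hMX, LinearMap.adjoint_adjoint, LinearMap.comp_zero,
          zero_add]
      rw [show 2 * n + 1 - 0 = 2 * n + 1 from rfl, hl]
    | succ p =>
      by_cases hp : p + 1 ≤ 2 * n
      · set k₀ := 2 * n - 1 - p with hk₀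
        have hk1 : p + (k₀ + 1 + 1) = 2 * n + 1 := by omega
        have hk2 : (p + 1) + (k₀ + 1) = 2 * n + 1 := by omega
        have hA := my_ata_transfer (e (p + 1) (k₀ + 1) hk2) (e (p + 2) k₀ (by omega))
          (LinearMap.adjoint (X.d k₀)) (Y.d (p + 1)) (fun y => he (p + 1) k₀ (by omega) y)
        have hB := my_aat_transfer (e p (k₀ + 1 + 1) hk1) (e (p + 1) (k₀ + 1) hk2)
          (LinearMap.adjoint (X.d (k₀ + 1))) (Y.d p) (fun y => he p (k₀ + 1) hk1 y)
        rw [Y.lap_succ_def p, hA, hB, my_conj_add, my_det_transfer]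
        have hsub : 2 * n + 1 - (p + 1) = k₀ + 1 := by omega
        rw [hsub, X.lap_succ_def k₀]
        simp only [LinearMap.adjoint_adjoint]
        congr 1
        exact add_comm _ _
      · have hp1 : p = 2 * n := by omega
        subst hp1
        have hB := my_aat_transfer (e (2 * n) 1 (by omega)) (e (2 * n + 1) 0 (by omega))
          (LinearMap.adjoint (X.d 0)) (Y.d (2 * n)) (fun y => he (2 * n) 0 (by omega) y)
        rw [Y.lap_succ_def (2 * n), hMY, LinearMap.comp_zero, zero_add, hB, my_det_transfer]
        have hsub : 2 * n + 1 - (2 * n + 1) = 0 := by omega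
        rw [hsub, X.lap_zero_def]
        simp only [LinearMap.adjoint_adjoint]
  -- the torsion computation
  refine ⟨hYac, ?_⟩
  have halt := X.alt_sum_zero hX
  simp only [logT]
  congr 1
  calc ∑ j ∈ Finset.range (2 * n + 1 + 1),
        (-1 : ℝ) ^ (j + 1) * (j : ℝ) * Real.log ((LinearMap.det (Y.lap j)).re)
      = ∑ j ∈ Finset.range (2 * n + 1 + 1),
        (-1 : ℝ) ^ (j + 1) * (j : ℝ) *
          Real.log ((LinearMap.det (X.lap (2 * n + 1 - j))).re) := by
        refine Finset.sum_congr rfl fun j hj => ?_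
        have hj' : j ≤ 2 * n + 1 := by
          have := Finset.mem_range.mp hj; omega
        rw [hdet j hj']
    _ = ∑ j ∈ Finset.range (2 * n + 1 + 1),
        (-1 : ℝ) ^ ((2 * n + 1 - j) + 1) * ((2 * n + 1 - j : ℕ) : ℝ) *
          Real.log ((LinearMap.det (X.lap (2 * n + 1 - (2 * n + 1 - j)))).re) :=
        (Finset.sum_range_reflect
          (fun i => (-1 : ℝ) ^ (i + 1) * (i : ℝ) *
            Real.log ((LinearMap.det (X.lap (2 * n + 1 - i))).re)) (2 * n + 1 + 1)).symm
    _ = ∑ j ∈ Finset.range (2 * n + 1 + 1),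
        ((2 * n + 1 : ℝ) * ((-1 : ℝ) ^ j * Real.log ((LinearMap.det (X.lap j)).re)) +
          (-1 : ℝ) ^ (j + 1) * (j : ℝ) * Real.log ((LinearMap.det (X.lap j)).re)) := by
        refine Finset.sum_congr rfl fun j hj => ?_
        have hj' : j ≤ 2 * n + 1 := by
          have := Finset.mem_range.mp hj; omega
        have hidx2 : 2 * n + 1 - (2 * n + 1 - j) = j := by omega
        rw [hidx2]
        have hcast : ((2 * n + 1 - j : ℕ) : ℝ) = (2 * n + 1 : ℝ) - (j : ℝ) := by
          rw [Nat.cast_sub hj']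
          push_cast
          ring
        have hsign : ((-1 : ℝ) ^ (2 * n + 1 - j)) = -(-1 : ℝ) ^ j := by
          have hy : ((-1 : ℝ) ^ j) * ((-1 : ℝ) ^ j) = 1 := by
            rw [← pow_add]
            exact Even.neg_one_pow ⟨j, rfl⟩
          have hab : ((-1 : ℝ) ^ (2 * n + 1 - j)) * ((-1 : ℝ) ^ j) = -1 := by
            rw [← pow_add, Nat.sub_add_cancel hj']
            exact Odd.neg_one_pow ⟨n, by ring⟩
          have h1 : ((-1 : ℝ) ^ (2 * n + 1 - j)) * (((-1 : ℝ) ^ j) * ((-1 : ℝ) ^ j)) =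
              -((-1 : ℝ) ^ j) := by
            rw [← mul_assoc, hab]; ring
          rwa [hy, mul_one] at h1
        rw [pow_succ, hsign, hcast]
        ring
    _ = ∑ j ∈ Finset.range (2 * n + 1 + 1),
        (-1 : ℝ) ^ (j + 1) * (j : ℝ) * Real.log ((LinearMap.det (X.lap j)).re) := by
        rw [Finset.sum_add_distrib, ← Finset.mul_sum, halt, mul_zero, zero_add]
end
end

section
/- Let (C, d) be an acyclic cochain complex of finite-dimensional complex inner product spaces. Define its suspension ΣC by (ΣC)_i := C_{i−1} for i ≥ 1, (ΣC)_0 := 0, with differential (Σd)_i := −d_{i−1} for i ≥ 1. Then ΣC is again an acyclic cochain complex of finite-dimensional complex inner product spaces and T(ΣC) = T(C)^{−1}. -/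
noncomputable section

open LinearMap

namespace TorsionAux
set_option maxHeartbeats 1000000

variable {E F : Type*} [NormedAddCommGroup E] [InnerProductSpace ℂ E] [FiniteDimensional ℂ E]
  [NormedAddCommGroup F] [InnerProductSpace ℂ F] [FiniteDimensional ℂ F]


/-- orthogonal projection as an endomorphism -/
def projEnd (K : Submodule ℂ E) : E →ₗ[ℂ] E :=
  K.subtype ∘ₗ (Submodule.orthogonalProjectionOnto K : E →L[ℂ] K).toLinearMap

@[simp] lemma projEnd_apply (K : Submodule ℂ E) (x : E) :
    projEnd K x = (Submodule.orthogonalProjectionOnto K x : E) := rfl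

lemma projEnd_mem {K : Submodule ℂ E} {x : E} (h : x ∈ K) : projEnd K x = x := by
  simp [Submodule.starProjection_eq_self_iff.2 h]

lemma projEnd_mem_orth {K : Submodule ℂ E} {x : E} (h : x ∈ Kᗮ) : projEnd K x = 0 := by
  simp [Submodule.orthogonalProjectionOnto_apply_of_mem_orthogonal h]

lemma projEnd_orth_eq (K : Submodule ℂ E) (x : E) : projEnd Kᗮ x = x - projEnd K x := by
  have := Submodule.starProjection_add_starProjection_orthogonal (K := K) x
  simp only [projEnd_apply]
  rw [eq_sub_iff_add_eq, add_comm]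
  exact this

lemma projEnd_bot : projEnd (⊥ : Submodule ℂ E) = 0 := by
  ext x; simp [projEnd, Submodule.orthogonalProjectionOnto_bot]

lemma projEnd_top : projEnd (⊤ : Submodule ℂ E) = LinearMap.id := by
  ext x; simp [projEnd_mem (Submodule.mem_top)]

lemma inner_projEnd_left_mem (K : Submodule ℂ E) {k : E} (hk : k ∈ K) (x : E) :
    (inner ℂ (projEnd K x) k : ℂ) = inner ℂ x k := by
  have h := Submodule.starProjection_inner_eq_zero x k hk
  have : (inner ℂ (x - projEnd K x) k : ℂ) = 0 := h
  rw [inner_sub_left, sub_eq_zero] at this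
  exact this.symm

lemma inner_projEnd_right_mem (K : Submodule ℂ E) {k : E} (hk : k ∈ K) (x : E) :
    (inner ℂ k (projEnd K x) : ℂ) = inner ℂ k x := by
  rw [← inner_conj_symm, inner_projEnd_left_mem K hk x, inner_conj_symm]

lemma adjoint_lie {E F : Type*} [NormedAddCommGroup E] [InnerProductSpace ℂ E]
    [FiniteDimensional ℂ E] [NormedAddCommGroup F] [InnerProductSpace ℂ F]
    [FiniteDimensional ℂ F] (e : E ≃ₗᵢ[ℂ] F) :
    LinearMap.adjoint (e.toLinearEquiv.toLinearMap) = e.symm.toLinearEquiv.toLinearMap := by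
  symm
  rw [LinearMap.eq_adjoint_iff]
  intro x y
  simp only [LinearEquiv.coe_coe, LinearIsometryEquiv.coe_toLinearEquiv]
  rw [← e.inner_map_map (e.symm x) y, e.apply_symm_apply]


lemma det_adjoint {E : Type*} [NormedAddCommGroup E] [InnerProductSpace ℂ E]
    [FiniteDimensional ℂ E] (f : E →ₗ[ℂ] E) :
    LinearMap.det (LinearMap.adjoint f) = starRingEnd ℂ (LinearMap.det f) := by
  let b := stdOrthonormalBasis ℂ E
  rw [← LinearMap.det_toMatrix b.toBasis, ← LinearMap.det_toMatrix b.toBasis f,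
    LinearMap.toMatrix_adjoint b b, Matrix.det_conjTranspose]
  rfl

lemma det_prodMap {E F : Type*} [NormedAddCommGroup E] [InnerProductSpace ℂ E]
    [FiniteDimensional ℂ E] [NormedAddCommGroup F] [InnerProductSpace ℂ F]
    [FiniteDimensional ℂ F] (f : E →ₗ[ℂ] E) (g : F →ₗ[ℂ] F) :
    LinearMap.det (f.prodMap g) = LinearMap.det f * LinearMap.det g := by
  classical
  let bE := Module.finBasis ℂ E
  let bF := Module.finBasis ℂ F
  rw [← LinearMap.det_toMatrix (bE.prod bF), LinearMap.toMatrix_prodMap,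
    Matrix.det_fromBlocks_zero₂₁, LinearMap.det_toMatrix, LinearMap.det_toMatrix]

lemma exists_lie {E F : Type*} [NormedAddCommGroup E] [InnerProductSpace ℂ E]
    [FiniteDimensional ℂ E] [NormedAddCommGroup F] [InnerProductSpace ℂ F]
    [FiniteDimensional ℂ F] (h : Module.finrank ℂ E = Module.finrank ℂ F) :
    Nonempty (E ≃ₗᵢ[ℂ] F) :=
  ⟨(stdOrthonormalBasis ℂ E).repr.trans
    ((LinearIsometryEquiv.piLpCongrLeft 2 ℂ ℂ (finCongr h)).trans
      (stdOrthonormalBasis ℂ F).repr.symm)⟩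

lemma key (d : E →ₗ[ℂ] F) :
    ∃ r : ℝ, 0 < r ∧
      LinearMap.det ((LinearMap.adjoint d) ∘ₗ d + projEnd (LinearMap.ker d)) = (r : ℂ) ∧
      LinearMap.det (d ∘ₗ (LinearMap.adjoint d) + projEnd ((LinearMap.range d)ᗮ)) = (r : ℂ) := by
  classical
  set K := LinearMap.ker d with hK
  set R' := (LinearMap.range d)ᗮ with hR'
  haveI : FiniteDimensional ℂ (WithLp 2 (E × ↥R')) :=
    Module.Finite.equiv (WithLp.linearEquiv 2 ℂ (E × ↥R')).symm
  haveI : FiniteDimensional ℂ (WithLp 2 (F × ↥K)) :=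
    Module.Finite.equiv (WithLp.linearEquiv 2 ℂ (F × ↥K)).symm
  set eE := WithLp.linearEquiv 2 ℂ (E × ↥R') with heE
  set eF := WithLp.linearEquiv 2 ℂ (F × ↥K) with heF
  -- the maps
  set M : WithLp 2 (E × ↥R') →ₗ[ℂ] WithLp 2 (F × ↥K) :=
    eF.symm.toLinearMap ∘ₗ
      (LinearMap.prod (d ∘ₗ (LinearMap.fst ℂ E ↥R') + R'.subtype ∘ₗ (LinearMap.snd ℂ E ↥R'))
        ((Submodule.orthogonalProjectionOnto K : E →L[ℂ] K).toLinearMap ∘ₗ (LinearMap.fst ℂ E ↥R'))) ∘ₗ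
      eE.toLinearMap with hM
  set Nm : WithLp 2 (F × ↥K) →ₗ[ℂ] WithLp 2 (E × ↥R') :=
    eE.symm.toLinearMap ∘ₗ
      (LinearMap.prod ((LinearMap.adjoint d) ∘ₗ (LinearMap.fst ℂ F ↥K)
          + K.subtype ∘ₗ (LinearMap.snd ℂ F ↥K))
        ((Submodule.orthogonalProjectionOnto R' : F →L[ℂ] R').toLinearMap ∘ₗ (LinearMap.fst ℂ F ↥K))) ∘ₗ
      eF.toLinearMap with hNm
  have M_fst : ∀ x : WithLp 2 (E × ↥R'), (M x).fst = d x.fst + (x.snd : F) := fun _ => rfl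
  have M_snd : ∀ x : WithLp 2 (E × ↥R'), (M x).snd = Submodule.orthogonalProjectionOnto K x.fst := fun _ => rfl
  have N_fst : ∀ y : WithLp 2 (F × ↥K),
      (Nm y).fst = (LinearMap.adjoint d) y.fst + (y.snd : E) := fun _ => rfl
  have N_snd : ∀ y : WithLp 2 (F × ↥K),
      (Nm y).snd = Submodule.orthogonalProjectionOnto R' y.fst := fun _ => rfl
  -- Nm is the adjoint of M
  have hadj : Nm = LinearMap.adjoint M := by
    rw [LinearMap.eq_adjoint_iff]
    intro y x
    rw [WithLp.prod_inner_apply, WithLp.prod_inner_apply]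
    change inner ℂ (Nm y).fst x.fst + inner ℂ (Nm y).snd x.snd
      = inner ℂ y.fst (M x).fst + inner ℂ y.snd (M x).snd
    rw [N_fst, N_snd, M_fst, M_snd]
    rw [Submodule.coe_inner, Submodule.coe_inner]
    rw [inner_add_left, inner_add_right, LinearMap.adjoint_inner_left]
    have h1 : (inner ℂ ((Submodule.orthogonalProjectionOnto R' y.fst : F)) ((x.snd : F)) : ℂ)
        = inner ℂ y.fst (x.snd : F) := by
      have h := Submodule.starProjection_inner_eq_zero y.fst (x.snd : F) x.snd.2
      rw [inner_sub_left, sub_eq_zero] at h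
      exact h.symm
    have h2 : (inner ℂ ((y.snd : E)) ((Submodule.orthogonalProjectionOnto K x.fst : E)) : ℂ)
        = inner ℂ (y.snd : E) x.fst := by
      have h := Submodule.starProjection_inner_eq_zero x.fst (y.snd : E) y.snd.2
      rw [inner_sub_left, sub_eq_zero] at h
      rw [← inner_conj_symm, ← Submodule.starProjection_apply, ← h, inner_conj_symm]
    rw [h1, h2]
    ring
  -- the two composition identities
  have comp1 : (LinearMap.adjoint M) ∘ₗ M =
      eE.symm.toLinearMap ∘ₗ (((LinearMap.adjoint d) ∘ₗ d + projEnd K).prodMap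
        (LinearMap.id : ↥R' →ₗ[ℂ] ↥R')) ∘ₗ eE.toLinearMap := by
    rw [← hadj]
    apply LinearMap.ext; intro x
    have hw : (LinearMap.adjoint d) (x.snd : F) = 0 := by
      apply ext_inner_right ℂ; intro v
      rw [LinearMap.adjoint_inner_left, inner_zero_left]
      exact Submodule.inner_left_of_mem_orthogonal (LinearMap.mem_range_self d v) x.snd.2
    have hfst : (Nm (M x)).fst = ((LinearMap.adjoint d) ∘ₗ d + projEnd K) x.fst := by
      rw [N_fst, M_fst, M_snd, map_add, hw, add_zero]
      rfl
    have hsnd : (Nm (M x)).snd = x.snd := by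
      rw [N_snd, M_fst, map_add]
      rw [Submodule.orthogonalProjectionOnto_apply_of_mem_orthogonal
        (Submodule.le_orthogonal_orthogonal _ (LinearMap.mem_range_self d x.fst)),
        Submodule.orthogonalProjectionOnto_mem_subspace_eq_self, zero_add]
    exact (WithLp.ext_iff 2).2 (Prod.ext hfst hsnd)
  have comp2 : M ∘ₗ (LinearMap.adjoint M) =
      eF.symm.toLinearMap ∘ₗ ((d ∘ₗ (LinearMap.adjoint d) + projEnd R').prodMap
        (LinearMap.id : ↥K →ₗ[ℂ] ↥K)) ∘ₗ eF.toLinearMap := by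
    rw [← hadj]
    apply LinearMap.ext; intro y
    have hk : d (y.snd : E) = 0 := y.snd.2
    have hadjmem : (LinearMap.adjoint d) y.fst ∈ Kᗮ := by
      intro u hu
      rw [LinearMap.adjoint_inner_right]
      rw [hK, LinearMap.mem_ker] at hu
      rw [hu, inner_zero_left]
    have hfst : (M (Nm y)).fst = (d ∘ₗ (LinearMap.adjoint d) + projEnd R') y.fst := by
      rw [M_fst, N_fst, N_snd, map_add, hk, add_zero]
      rfl
    have hsnd : (M (Nm y)).snd = y.snd := by
      rw [M_snd, N_fst, map_add]
      rw [Submodule.orthogonalProjectionOnto_apply_of_mem_orthogonal hadjmem,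
        Submodule.orthogonalProjectionOnto_mem_subspace_eq_self, zero_add]
    exact (WithLp.ext_iff 2).2 (Prod.ext hfst hsnd)
  -- determinants via the product decomposition
  have detcomp1 : LinearMap.det ((LinearMap.adjoint M) ∘ₗ M)
      = LinearMap.det ((LinearMap.adjoint d) ∘ₗ d + projEnd K) := by
    rw [comp1]
    have h := LinearMap.det_conj (((LinearMap.adjoint d) ∘ₗ d + projEnd K).prodMap
      (LinearMap.id : ↥R' →ₗ[ℂ] ↥R')) eE.symm
    rw [LinearEquiv.symm_symm] at h
    rw [h, det_prodMap, LinearMap.det_id, mul_one]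
  have detcomp2 : LinearMap.det (M ∘ₗ (LinearMap.adjoint M))
      = LinearMap.det (d ∘ₗ (LinearMap.adjoint d) + projEnd R') := by
    rw [comp2]
    have h := LinearMap.det_conj ((d ∘ₗ (LinearMap.adjoint d) + projEnd R').prodMap
      (LinearMap.id : ↥K →ₗ[ℂ] ↥K)) eF.symm
    rw [LinearEquiv.symm_symm] at h
    rw [h, det_prodMap, LinearMap.det_id, mul_one]
  -- dimensions agree
  have hdim : Module.finrank ℂ (WithLp 2 (F × ↥K)) = Module.finrank ℂ (WithLp 2 (E × ↥R')) := by
    rw [LinearEquiv.finrank_eq eE, LinearEquiv.finrank_eq eF,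
      Module.finrank_prod, Module.finrank_prod]
    have h1 := LinearMap.finrank_range_add_finrank_ker d
    have h2 := Submodule.finrank_add_finrank_orthogonal (LinearMap.range d)
    rw [← hK] at h1
    rw [← hR'] at h2
    omega
  obtain ⟨u⟩ := exists_lie hdim
  set W : WithLp 2 (E × ↥R') →ₗ[ℂ] WithLp 2 (E × ↥R') := u.toLinearEquiv.toLinearMap ∘ₗ M with hW
  have hadjW : LinearMap.adjoint W = LinearMap.adjoint M ∘ₗ u.symm.toLinearEquiv.toLinearMap := by
    rw [hW, LinearMap.adjoint_comp, adjoint_lie]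
  have hWW : (LinearMap.adjoint W) ∘ₗ W = (LinearMap.adjoint M) ∘ₗ M := by
    rw [hadjW, hW]
    apply LinearMap.ext; intro x
    simp
  have hWW2 : W ∘ₗ (LinearMap.adjoint W)
      = (u.toLinearEquiv : WithLp 2 (F × ↥K) →ₗ[ℂ] WithLp 2 (E × ↥R')) ∘ₗ
        (M ∘ₗ (LinearMap.adjoint M)) ∘ₗ
        (u.toLinearEquiv.symm : WithLp 2 (E × ↥R') →ₗ[ℂ] WithLp 2 (F × ↥K)) := by
    rw [hadjW, hW]
    apply LinearMap.ext; intro x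
    simp
  -- injectivity of W
  have hMinj : ∀ x, M x = 0 → x = 0 := by
    intro x hx
    have hfst : d x.fst + (x.snd : F) = 0 := by rw [← M_fst x, hx]; rfl
    have hsnd : (Submodule.orthogonalProjectionOnto K x.fst : E) = 0 := by
      rw [← M_snd x] at *
      rw [hx]; rfl
    have hdx : d x.fst = 0 := by
      rw [← inner_self_eq_zero (𝕜 := ℂ)]
      have hmem : d x.fst ∈ R' := by
        have : d x.fst = -(x.snd : F) := by linear_combination (norm := abel) hfst
        rw [this]; exact neg_mem x.snd.2
      exact Submodule.inner_right_of_mem_orthogonal (LinearMap.mem_range_self d x.fst) hmem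
    have hx2 : (x.snd : F) = 0 := by rwa [hdx, zero_add] at hfst
    have hx1 : x.fst = 0 := by
      have : x.fst ∈ K := by rw [hK, LinearMap.mem_ker]; exact hdx
      rw [← Submodule.starProjection_eq_self_iff.2 this]; exact hsnd
    exact (WithLp.ext_iff 2).2 (Prod.ext hx1 (Submodule.coe_eq_zero.1 hx2))
  have hWinj : LinearMap.ker W = ⊥ := by
    rw [LinearMap.ker_eq_bot]
    intro a b hab
    rw [hW] at hab
    have : M a = M b := u.toLinearEquiv.injective hab
    have := hMinj (a - b) (by rw [map_sub, this, sub_self])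
    rwa [sub_eq_zero] at this
  have hdetW : LinearMap.det W ≠ 0 := by
    intro h
    have := LinearMap.bot_lt_ker_of_det_eq_zero h
    rw [hWinj] at this
    exact lt_irrefl _ this
  refine ⟨Complex.normSq (LinearMap.det W), Complex.normSq_pos.2 hdetW, ?_, ?_⟩
  · rw [← detcomp1, ← hWW, LinearMap.det_comp, det_adjoint, ← Complex.normSq_eq_conj_mul_self]
  · rw [← detcomp2, ← LinearMap.det_conj (M ∘ₗ (LinearMap.adjoint M)) u.toLinearEquiv,
      ← hWW2, LinearMap.det_comp, det_adjoint, Complex.mul_conj]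


lemma telescope (L c : ℕ → ℝ) (h0 : L 0 = c 0) (hs : ∀ q, L (q + 1) = c q + c (q + 1)) :
    ∀ n, ∑ q ∈ Finset.range (n + 1), (-1 : ℝ) ^ q * L q = (-1) ^ n * c n := by
  intro n
  induction n with
  | zero => simpa using h0
  | succ n ih => rw [Finset.sum_range_succ, ih, hs n]; ring

lemma exists_r (N : ℕ) (X : FinComplex N) (hX : X.Acyclic) :
    ∃ r : ℕ → ℝ, (∀ q, 0 < r q) ∧ r N = 1 ∧
      LinearMap.det (X.lap 0) = ((r 0 : ℝ) : ℂ) ∧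
      ∀ q, LinearMap.det (X.lap (q + 1)) = (((r q * r (q + 1) : ℝ)) : ℂ) := by
  have hkey := fun q => key (X.d q)
  choose r hrpos h1 h2 using hkey
  refine ⟨r, hrpos, ?_, ?_, ?_⟩
  · have hdN : X.d N = 0 := by
      apply LinearMap.ext; intro x
      exact X.trivial_beyond (N + 1) (Nat.lt_succ_self N) _
    have hN := h1 N
    rw [hdN, LinearMap.comp_zero, LinearMap.ker_zero, projEnd_top, zero_add,
      LinearMap.det_id] at hN
    exact_mod_cast hN.symm
  · have h := h1 0
    rw [hX.1, projEnd_bot, add_zero] at h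
    exact h
  · intro q
    set K := LinearMap.ker (X.d (q + 1)) with hKdef
    have hfact : X.lap (q + 1) =
        ((LinearMap.adjoint (X.d (q + 1))) ∘ₗ (X.d (q + 1)) + projEnd K) ∘ₗ
          ((X.d q) ∘ₗ (LinearMap.adjoint (X.d q)) + projEnd Kᗮ) := by
      apply LinearMap.ext; intro x
      have hB : X.d q (LinearMap.adjoint (X.d q) x) ∈ K := by
        rw [hKdef, hX.2 q]
        exact LinearMap.mem_range_self _ _
      have hdd : X.d (q + 1) (X.d q (LinearMap.adjoint (X.d q) x)) = 0 := by
        have h := X.dd q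
        calc X.d (q + 1) (X.d q (LinearMap.adjoint (X.d q) x))
            = ((X.d (q + 1)).comp (X.d q)) (LinearMap.adjoint (X.d q) x) := rfl
          _ = 0 := by rw [h]; rfl
      have hQx : projEnd Kᗮ x = x - projEnd K x := projEnd_orth_eq K x
      have hdQx : X.d (q + 1) (projEnd Kᗮ x) = X.d (q + 1) x := by
        rw [hQx, map_sub]
        have : X.d (q + 1) (projEnd K x) = 0 := by
          have hm : projEnd K x ∈ K := by rw [projEnd_apply]; exact Submodule.coe_mem _
          exact hm
        rw [this, sub_zero]
      have hPQx : projEnd K (projEnd Kᗮ x) = 0 := by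
        apply projEnd_mem_orth
        rw [projEnd_apply]
        exact Submodule.coe_mem _
      have hPB : projEnd K (X.d q (LinearMap.adjoint (X.d q) x)) =
          X.d q (LinearMap.adjoint (X.d q) x) := projEnd_mem hB
      show LinearMap.adjoint (X.d (q + 1)) (X.d (q + 1) x)
          + X.d q (LinearMap.adjoint (X.d q) x) = _
      simp only [LinearMap.add_apply, LinearMap.comp_apply, map_add]
      rw [hdd, map_zero, hdQx, hPB, hPQx, add_zero]
      abel
    rw [hfact, LinearMap.det_comp, h1 (q + 1)]
    have h2' := h2 q
    rw [← hX.2 q] at h2'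
    rw [h2']
    push_cast
    ring

lemma alt_sum_zero (N : ℕ) (X : FinComplex N) (hX : X.Acyclic) :
    ∑ q ∈ Finset.range (N + 1), (-1 : ℝ) ^ q * Real.log ((LinearMap.det (X.lap q)).re) = 0 := by
  obtain ⟨r, hrpos, hrN, h0, hs⟩ := exists_r N X hX
  have ht := telescope (fun q => Real.log ((LinearMap.det (X.lap q)).re))
    (fun q => Real.log (r q))
    (by show Real.log ((LinearMap.det (X.lap 0)).re) = _
        simp only [h0, Complex.ofReal_re])
    (fun q => by
      show Real.log ((LinearMap.det (X.lap (q + 1))).re) = _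
      rw [hs q, Complex.ofReal_re]
      exact Real.log_mul (ne_of_gt (hrpos q)) (ne_of_gt (hrpos (q + 1)))) N
  rw [ht, hrN, Real.log_one, mul_zero]


open FinComplex in
lemma lap_conj (N : ℕ) (X : FinComplex N) (Y : FinComplex (N + 1))
    (h0 : ∀ x : Y.C 0, x = 0)
    (e : ∀ q, Y.C (q + 1) ≃ₗᵢ[ℂ] X.C q)
    (he : ∀ q (y : Y.C (q + 1)), e (q + 1) (Y.d (q + 1) y) = -(X.d q (e q y))) :
    ∀ q, LinearMap.det (Y.lap (q + 1)) = LinearMap.det (X.lap q) := by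
  have hdpt : ∀ q (y : Y.C (q + 1)), Y.d (q + 1) y = (e (q + 1)).symm (-(X.d q (e q y))) := by
    intro q y
    apply (e (q + 1)).injective
    rw [LinearIsometryEquiv.apply_symm_apply, he]
  have hacpt : ∀ q (w : Y.C (q + 2)),
      LinearMap.adjoint (Y.d (q + 1)) w
        = (e q).symm (-(LinearMap.adjoint (X.d q) ((e (q + 1)) w))) := by
    intro q
    have heq : ((e q).symm.toLinearEquiv.toLinearMap ∘ₗ
        ((-(LinearMap.adjoint (X.d q))) ∘ₗ (e (q + 1)).toLinearEquiv.toLinearMap))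
        = LinearMap.adjoint (Y.d (q + 1)) := by
      rw [LinearMap.eq_adjoint_iff]
      intro x y
      simp only [LinearMap.comp_apply, LinearMap.neg_apply, LinearEquiv.coe_coe,
        LinearIsometryEquiv.coe_toLinearEquiv]
      calc (inner ℂ ((e q).symm (-(LinearMap.adjoint (X.d q) ((e (q + 1)) x)))) y : ℂ)
          = inner ℂ (e q ((e q).symm (-(LinearMap.adjoint (X.d q) ((e (q + 1)) x))))) (e q y) :=
            ((e q).inner_map_map _ _).symm
        _ = inner ℂ (-(LinearMap.adjoint (X.d q) ((e (q + 1)) x))) (e q y) := by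
            rw [LinearIsometryEquiv.apply_symm_apply]
        _ = -(inner ℂ (LinearMap.adjoint (X.d q) ((e (q + 1)) x)) (e q y)) := inner_neg_left _ _
        _ = -(inner ℂ ((e (q + 1)) x) (X.d q (e q y))) := by rw [LinearMap.adjoint_inner_left]
        _ = inner ℂ ((e (q + 1)) x) (-(X.d q (e q y))) := (inner_neg_right _ _).symm
        _ = inner ℂ ((e (q + 1)) x) ((e (q + 1)) (Y.d (q + 1) y)) := by rw [he q y]
        _ = inner ℂ x (Y.d (q + 1) y) := (e (q + 1)).inner_map_map _ _
    intro w
    rw [← heq]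
    rfl
  intro q
  have hlap : Y.lap (q + 1)
      = ((e q).symm.toLinearEquiv : X.C q →ₗ[ℂ] Y.C (q + 1)) ∘ₗ (X.lap q) ∘ₗ
        ((e q).symm.toLinearEquiv.symm : Y.C (q + 1) →ₗ[ℂ] X.C q) := by
    apply LinearMap.ext; intro y
    have hrhs : (((e q).symm.toLinearEquiv : X.C q →ₗ[ℂ] Y.C (q + 1)) ∘ₗ (X.lap q) ∘ₗ
        ((e q).symm.toLinearEquiv.symm : Y.C (q + 1) →ₗ[ℂ] X.C q)) y
        = (e q).symm (X.lap q (e q y)) := rfl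
    rw [hrhs]
    cases q with
    | zero =>
      show LinearMap.adjoint (Y.d 1) (Y.d 1 y) + Y.d 0 (LinearMap.adjoint (Y.d 0) y)
          = (e 0).symm (X.lap 0 (e 0 y))
      have hz : LinearMap.adjoint (Y.d 0) y = 0 := h0 _
      rw [hz, map_zero, add_zero, hdpt 0 y, hacpt 0, LinearIsometryEquiv.apply_symm_apply]
      show _ = (e 0).symm (LinearMap.adjoint (X.d 0) (X.d 0 (e 0 y)))
      simp only [map_neg, neg_neg]
    | succ r =>
      show LinearMap.adjoint (Y.d (r + 2)) (Y.d (r + 2) y)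
          + Y.d (r + 1) (LinearMap.adjoint (Y.d (r + 1)) y)
          = (e (r + 1)).symm (X.lap (r + 1) (e (r + 1) y))
      rw [hdpt (r + 1) y, hacpt (r + 1), LinearIsometryEquiv.apply_symm_apply]
      rw [hacpt r y, hdpt r, LinearIsometryEquiv.apply_symm_apply]
      show _ = (e (r + 1)).symm (LinearMap.adjoint (X.d (r + 1)) (X.d (r + 1) (e (r + 1) y))
          + X.d r (LinearMap.adjoint (X.d r) (e (r + 1) y)))
      rw [map_add]
      simp only [map_neg, neg_neg]
  rw [hlap, LinearMap.det_conj]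


end TorsionAux

open FinComplex in
/-- **Lemma 1.13 (ii) of [BFK, "Relative torsion"]** (finite-dimensional case `𝒜 = ℂ`).
The suspension `ΣC` of an acyclic cochain complex `X` of finite-dimensional complex inner
product spaces — `(ΣC)_0 = 0`, `(ΣC)_i = C_{i-1}`, with differential `(Σd)_i = -d_{i-1}` —
is again an acyclic cochain complex, and `T(ΣC) = T(C)⁻¹`, i.e. `log T(ΣC) = - log T(C)`. -/
theorem torsion_suspension (N : ℕ) (X : FinComplex N) (hX : X.Acyclic)
    (Y : FinComplex (N + 1))
    (h0 : ∀ x : Y.C 0, x = 0)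
    (e : ∀ q, Y.C (q + 1) ≃ₗᵢ[ℂ] X.C q)
    (he : ∀ q (y : Y.C (q + 1)), e (q + 1) (Y.d (q + 1) y) = -(X.d q (e q y))) :
    Y.Acyclic ∧ Y.logT = -X.logT := by
  constructor
  · constructor
    · exact (Submodule.eq_bot_iff _).2 fun x _ => h0 x
    · intro q
      cases q with
      | zero =>
        have hr : LinearMap.range (Y.d 0) = ⊥ := by
          rw [LinearMap.range_eq_bot]
          apply LinearMap.ext; intro x
          rw [h0 x, map_zero]; rfl
        rw [hr]
        apply (Submodule.eq_bot_iff _).2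
        intro y hy
        rw [LinearMap.mem_ker] at hy
        have h1 : e 1 (Y.d 1 y) = 0 := by rw [hy, map_zero]
        rw [he 0 y, neg_eq_zero] at h1
        have h2 : e 0 y ∈ LinearMap.ker (X.d 0) := h1
        rw [hX.1, Submodule.mem_bot] at h2
        have := congrArg (e 0).symm h2
        simpa using this
      | succ r =>
        ext y
        rw [LinearMap.mem_ker, LinearMap.mem_range]
        constructor
        · intro hy
          have h1 : e (r + 2) (Y.d (r + 2) y) = -(X.d (r + 1) (e (r + 1) y)) := he (r + 1) y
          rw [hy, map_zero] at h1
          have h2 : X.d (r + 1) (e (r + 1) y) = 0 := by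
            rw [← neg_eq_zero, ← h1]
          have h3 : e (r + 1) y ∈ LinearMap.ker (X.d (r + 1)) := h2
          rw [hX.2 r] at h3
          obtain ⟨u, hu⟩ := h3
          refine ⟨(e r).symm (-u), ?_⟩
          apply (e (r + 1)).injective
          rw [he r, LinearIsometryEquiv.apply_symm_apply, map_neg, neg_neg, hu]
        · rintro ⟨z, rfl⟩
          have h := Y.dd (r + 1)
          calc Y.d (r + 2) (Y.d (r + 1) z) = ((Y.d (r + 2)).comp (Y.d (r + 1))) z := rfl
            _ = 0 := by rw [h]; rfl
  · have hdetY := TorsionAux.lap_conj N X Y h0 e he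
    have hsum := TorsionAux.alt_sum_zero N X hX
    show Y.logT = -X.logT
    unfold FinComplex.logT
    have key1 : ∑ q ∈ Finset.range (N + 1 + 1),
        (-1 : ℝ) ^ (q + 1) * (q : ℝ) * Real.log ((LinearMap.det (Y.lap q)).re)
        = ∑ q ∈ Finset.range (N + 1),
            (-1 : ℝ) ^ q * ((q : ℝ) + 1) * Real.log ((LinearMap.det (X.lap q)).re) := by
      rw [Finset.sum_range_succ']
      simp only [Nat.cast_zero, mul_zero, zero_mul, add_zero]
      apply Finset.sum_congr rfl
      intro q _
      rw [hdetY q]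
      push_cast
      ring
    rw [key1]
    have expand : ∀ q ∈ Finset.range (N + 1),
        (-1 : ℝ) ^ q * ((q : ℝ) + 1) * Real.log ((LinearMap.det (X.lap q)).re)
        = -((-1 : ℝ) ^ (q + 1) * (q : ℝ) * Real.log ((LinearMap.det (X.lap q)).re))
          + (-1 : ℝ) ^ q * Real.log ((LinearMap.det (X.lap q)).re) := by
      intro q _
      ring
    rw [Finset.sum_congr rfl expand, Finset.sum_add_distrib, hsum, add_zero,
      Finset.sum_neg_distrib]
    ring
end
end

section
/- Let C¹, C², C³ be cochain complexes of finite-dimensional complex inner product spaces, let f₁ : C¹ → C² be an isomorphism of complexes such that each f_{1,i} is a linear isometry of C¹_i onto C²_i, and let f₂ : C² → C³ be a morphism of complexes inducing an isomorphism in cohomology. Then the mapping cones C(f₂) and C(f₂ ∘ f₁) are acyclic and T(C(f₂ ∘ f₁)) = T(C(f₂)). -/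
noncomputable section

open LinearMap

section Aux

open FinComplex

local notation "⟪" x ", " y "⟫" => @inner ℂ _ _ x y

/-- The adjoint of (the linear map underlying) a linear isometric equivalence is its inverse. -/
lemma adjoint_isometryEquiv {α β : Type} [NormedAddCommGroup α] [InnerProductSpace ℂ α]
    [FiniteDimensional ℂ α] [NormedAddCommGroup β] [InnerProductSpace ℂ β]
    [FiniteDimensional ℂ β] (g : α ≃ₗᵢ[ℂ] β) :
    LinearMap.adjoint (g.toLinearEquiv : α →ₗ[ℂ] β) = (g.symm.toLinearEquiv : β →ₗ[ℂ] α) := by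
  symm
  rw [LinearMap.eq_adjoint_iff]
  intro x y
  simp only [LinearEquiv.coe_coe, LinearIsometryEquiv.coe_toLinearEquiv]
  rw [← g.inner_map_map (g.symm x) y, g.apply_symm_apply]

lemma pair_zero {α β : Type} [NormedAddCommGroup α] [InnerProductSpace ℂ α]
    [NormedAddCommGroup β] [InnerProductSpace ℂ β] (a : α) (b : β)
    (h : (WithLp.equiv 2 (α × β)).symm (a, b) = 0) : a = 0 ∧ b = 0 :=
  ⟨congrArg (fun p => ((WithLp.equiv 2 (α × β)) p).1) h,
   congrArg (fun p => ((WithLp.equiv 2 (α × β)) p).2) h⟩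

/-- The mapping cone of a morphism inducing an isomorphism in cohomology is acyclic. -/
lemma cone_acyclic {N : ℕ} (X Y : FinComplex N) (f : ∀ q, X.C q →ₗ[ℂ] Y.C q)
    (hm : IsMorphism X Y f) (hq : InducesCohomologyIso X Y f)
    (Z : FinComplex (N + 1)) (hZ : ConeIso X Y f Z) : Z.Acyclic := by
  obtain ⟨h1, h2, h3, h4⟩ := hq
  constructor
  · rw [Submodule.eq_bot_iff]
    intro z hz
    rw [LinearMap.mem_ker] at hz
    set u := hZ.e0.symm z with hu
    have hz' : z = hZ.e0 u := (hZ.e0.apply_symm_apply z).symm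
    rw [hz', hZ.compat0 u] at hz
    have h0 : (WithLp.equiv 2 (Y.C 0 × X.C 1)).symm (f 0 u, X.d 0 u) = 0 :=
      (hZ.e 0).map_eq_zero_iff.mp hz
    obtain ⟨ha, hb⟩ := pair_zero _ _ h0
    have : u = 0 := h1 u hb ha
    rw [hz', this, map_zero]
  · intro q
    ext z
    rw [LinearMap.mem_ker, LinearMap.mem_range]
    constructor
    · intro hz
      match q with
      | 0 =>
        set p := (hZ.e 0).symm z with hp
        set v : Y.C 0 := ((WithLp.equiv 2 (Y.C 0 × X.C 1)) p).1 with hv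
        set u : X.C 1 := ((WithLp.equiv 2 (Y.C 0 × X.C 1)) p).2 with hup
        have hz' : z = hZ.e 0 ((WithLp.equiv 2 (Y.C 0 × X.C 1)).symm (v, u)) :=
          ((hZ.e 0).apply_symm_apply z).symm
        rw [hz', hZ.compat 0 v u] at hz
        obtain ⟨ha, hb⟩ := pair_zero _ _ ((hZ.e 1).map_eq_zero_iff.mp hz)
        obtain ⟨w0, hw0⟩ := h3 0 u hb ⟨v, neg_add_eq_zero.mp ha⟩
        obtain ⟨x0, hx0d, hx0f⟩ := h2 (v - f 0 w0) (by
          rw [map_sub, ← hm 0 w0, hw0]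
          exact sub_eq_zero.mpr (neg_add_eq_zero.mp ha))
        refine ⟨hZ.e0 (w0 + x0), ?_⟩
        have hfw : f 0 (w0 + x0) = v := by rw [map_add, hx0f]; abel
        have hdw : X.d 0 (w0 + x0) = u := by rw [map_add, hw0, hx0d, add_zero]
        rw [hZ.compat0, hfw, hdw, hz']
      | (q + 1) =>
        set p := (hZ.e (q + 1)).symm z with hp
        set v : Y.C (q + 1) := ((WithLp.equiv 2 (Y.C (q + 1) × X.C (q + 2))) p).1 with hv
        set u : X.C (q + 2) := ((WithLp.equiv 2 (Y.C (q + 1) × X.C (q + 2))) p).2 with hup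
        have hz' : z = hZ.e (q + 1) ((WithLp.equiv 2 (Y.C (q + 1) × X.C (q + 2))).symm (v, u)) :=
          ((hZ.e (q + 1)).apply_symm_apply z).symm
        rw [hz', hZ.compat (q + 1) v u] at hz
        obtain ⟨ha, hb⟩ := pair_zero _ _ ((hZ.e (q + 2)).map_eq_zero_iff.mp hz)
        obtain ⟨t0, ht0⟩ := h3 (q + 1) u hb ⟨v, neg_add_eq_zero.mp ha⟩
        obtain ⟨x, hxd, w', hw'⟩ := h4 q (v - f (q + 1) t0) (by
          rw [map_sub, ← hm (q + 1) t0, ht0]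
          exact sub_eq_zero.mpr (neg_add_eq_zero.mp ha))
        refine ⟨hZ.e q ((WithLp.equiv 2 (Y.C q × X.C (q + 1))).symm (-w', t0 + x)), ?_⟩
        have hfw : -(Y.d q) (-w') + f (q + 1) (t0 + x) = v := by
          rw [map_neg, neg_neg, map_add, ← hw']; abel
        have hdw : X.d (q + 1) (t0 + x) = u := by rw [map_add, ht0, hxd, add_zero]
        rw [hZ.compat q (-w') (t0 + x), hfw, hdw, hz']
    · rintro ⟨w, rfl⟩
      have := LinearMap.ext_iff.mp (Z.dd q) w
      simpa using this

/-- Transfer of acyclicity along an isometric isomorphism of complexes. -/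
lemma transfer_acyclic {M : ℕ} (X Y : FinComplex M) (g : ∀ q, X.C q ≃ₗᵢ[ℂ] Y.C q)
    (hg : ∀ q x, g (q + 1) (X.d q x) = Y.d q (g q x)) (hX : X.Acyclic) : Y.Acyclic := by
  obtain ⟨hX0, hXs⟩ := hX
  constructor
  · rw [Submodule.eq_bot_iff]
    intro y hy
    rw [LinearMap.mem_ker] at hy
    have h := hg 0 ((g 0).symm y)
    rw [(g 0).apply_symm_apply, hy] at h
    have : X.d 0 ((g 0).symm y) = 0 := (g 1).map_eq_zero_iff.mp h
    have h0 : (g 0).symm y = 0 := by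
      have := hX0 ▸ LinearMap.mem_ker.mpr this
      simpa using this
    have := congrArg (g 0) h0
    rwa [(g 0).apply_symm_apply, map_zero] at this
  · intro q
    ext y
    rw [LinearMap.mem_ker, LinearMap.mem_range]
    constructor
    · intro hy
      have h := hg (q + 1) ((g (q + 1)).symm y)
      rw [(g (q + 1)).apply_symm_apply, hy] at h
      have hk : X.d (q + 1) ((g (q + 1)).symm y) = 0 := (g (q + 2)).map_eq_zero_iff.mp h
      have : (g (q + 1)).symm y ∈ LinearMap.range (X.d q) := by
        rw [← hXs q]; exact LinearMap.mem_ker.mpr hk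
      obtain ⟨u, hu⟩ := this
      refine ⟨g q u, ?_⟩
      rw [← hg q u, hu, (g (q + 1)).apply_symm_apply]
    · rintro ⟨v, rfl⟩
      have hzero : X.d (q + 1) ((X.d q) ((g q).symm v)) = 0 := by
        have := LinearMap.ext_iff.mp (X.dd q) ((g q).symm v)
        simpa using this
      rw [← (g q).apply_symm_apply v, ← hg q, ← hg (q + 1), hzero, map_zero]

/-- Transfer of torsion along an isometric isomorphism of complexes. -/
lemma transfer_logT {M : ℕ} (X Y : FinComplex M) (g : ∀ q, X.C q ≃ₗᵢ[ℂ] Y.C q)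
    (hg : ∀ q x, g (q + 1) (X.d q x) = Y.d q (g q x)) : X.logT = Y.logT := by
  have hd : ∀ q, Y.d q =
      (((g (q + 1)).toLinearEquiv : X.C (q + 1) →ₗ[ℂ] Y.C (q + 1)).comp (X.d q)).comp
        ((g q).symm.toLinearEquiv : Y.C q →ₗ[ℂ] X.C q) := by
    intro q
    ext y
    simp only [LinearMap.comp_apply, LinearEquiv.coe_coe, LinearIsometryEquiv.coe_toLinearEquiv]
    rw [hg q ((g q).symm y), (g q).apply_symm_apply]
  have ha : ∀ q, LinearMap.adjoint (Y.d q) =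
      (((g q).toLinearEquiv : X.C q →ₗ[ℂ] Y.C q).comp (LinearMap.adjoint (X.d q))).comp
        ((g (q + 1)).symm.toLinearEquiv : Y.C (q + 1) →ₗ[ℂ] X.C (q + 1)) := by
    intro q
    rw [hd q, LinearMap.adjoint_comp, LinearMap.adjoint_comp, adjoint_isometryEquiv,
      adjoint_isometryEquiv, LinearIsometryEquiv.symm_symm]
    rfl
  have hlap : ∀ q, Y.lap q =
      (((g q).toLinearEquiv : X.C q →ₗ[ℂ] Y.C q).comp (X.lap q)).comp
        ((g q).symm.toLinearEquiv : Y.C q →ₗ[ℂ] X.C q) := by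
    intro q
    match q with
    | 0 =>
      have h0 : Y.lap 0 = (LinearMap.adjoint (Y.d 0)).comp (Y.d 0) := rfl
      rw [h0, ha 0, hd 0]
      ext y
      simp only [LinearMap.comp_apply, LinearEquiv.coe_coe,
        LinearIsometryEquiv.coe_toLinearEquiv, LinearIsometryEquiv.symm_apply_apply]
      rfl
    | (q + 1) =>
      have h0 : Y.lap (q + 1) = (LinearMap.adjoint (Y.d (q + 1))).comp (Y.d (q + 1)) +
          (Y.d q).comp (LinearMap.adjoint (Y.d q)) := rfl
      have hx : X.lap (q + 1) = (LinearMap.adjoint (X.d (q + 1))).comp (X.d (q + 1)) +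
          (X.d q).comp (LinearMap.adjoint (X.d q)) := rfl
      rw [h0, hx, ha (q + 1), ha q, hd (q + 1), hd q]
      ext y
      simp only [LinearMap.add_apply, LinearMap.comp_apply, LinearEquiv.coe_coe,
        LinearIsometryEquiv.coe_toLinearEquiv, LinearIsometryEquiv.symm_apply_apply, map_add]
  have hdet : ∀ q, LinearMap.det (Y.lap q) = LinearMap.det (X.lap q) := by
    intro q
    rw [hlap q]
    exact LinearMap.det_conj (X.lap q) (g q).toLinearEquiv
  unfold logT
  congr 1
  refine Finset.sum_congr rfl fun q _ => ?_
  rw [hdet q]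


/-- Upgrade a bijective norm-preserving linear map to a linear isometry equivalence. -/
def isoOfBij {α β : Type} [NormedAddCommGroup α] [InnerProductSpace ℂ α]
    [NormedAddCommGroup β] [InnerProductSpace ℂ β] (f : α →ₗ[ℂ] β)
    (hb : Function.Bijective f) (hn : ∀ x, ‖f x‖ = ‖x‖) : α ≃ₗᵢ[ℂ] β :=
  { toLinearEquiv := LinearEquiv.ofBijective f hb, norm_map' := hn }

@[simp] lemma isoOfBij_apply {α β : Type} [NormedAddCommGroup α] [InnerProductSpace ℂ α]
    [NormedAddCommGroup β] [InnerProductSpace ℂ β] (f : α →ₗ[ℂ] β)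
    (hb : Function.Bijective f) (hn : ∀ x, ‖f x‖ = ‖x‖) (x : α) :
    isoOfBij f hb hn x = f x := rfl

/-- `id × F` as an isometry of `L²` products. -/
def prodIso {α β γ : Type} [NormedAddCommGroup α] [InnerProductSpace ℂ α]
    [NormedAddCommGroup β] [InnerProductSpace ℂ β]
    [NormedAddCommGroup γ] [InnerProductSpace ℂ γ] (F : β ≃ₗᵢ[ℂ] γ) :
    WithLp 2 (α × β) ≃ₗᵢ[ℂ] WithLp 2 (α × γ) :=
  LinearEquiv.isometryOfInner
    ((WithLp.linearEquiv 2 ℂ (α × β)).trans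
      (((LinearEquiv.refl ℂ α).prodCongr F.toLinearEquiv).trans
        (WithLp.linearEquiv 2 ℂ (α × γ)).symm))
    (by
      intro x y
      have h1 : ∀ z : WithLp 2 (α × β),
          ((WithLp.linearEquiv 2 ℂ (α × β)).trans
            (((LinearEquiv.refl ℂ α).prodCongr F.toLinearEquiv).trans
              (WithLp.linearEquiv 2 ℂ (α × γ)).symm)) z =
          (WithLp.equiv 2 (α × γ)).symm (z.fst, F z.snd) := fun z => rfl
      rw [h1 x, h1 y]
      simp only [WithLp.prod_inner_apply, WithLp.equiv_symm_apply, WithLp.ofLp_toLp, WithLp.ofLp_fst, WithLp.ofLp_snd,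
        LinearIsometryEquiv.inner_map_map])

@[simp] lemma prodIso_pair {α β γ : Type} [NormedAddCommGroup α] [InnerProductSpace ℂ α]
    [NormedAddCommGroup β] [InnerProductSpace ℂ β]
    [NormedAddCommGroup γ] [InnerProductSpace ℂ γ] (F : β ≃ₗᵢ[ℂ] γ) (a : α) (b : β) :
    prodIso F ((WithLp.equiv 2 (α × β)).symm (a, b)) =
      (WithLp.equiv 2 (α × γ)).symm (a, F b) := rfl

end Aux


open FinComplex in
/-- **Proposition 1.16 (i) of [BFK, "Relative torsion"]** (finite-dimensional case
`𝒜 = ℂ`).  If `f₁ : C¹ → C²` is an isometric isomorphism of cochain complexes of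
finite-dimensional complex inner product spaces and `f₂ : C² → C³` is a morphism inducing
an isomorphism in cohomology, then the mapping cones `C(f₂)` and `C(f₂ ∘ f₁)` are acyclic
and `T(C(f₂ ∘ f₁)) = T(C(f₂))`, i.e. `log T(C(f₂ ∘ f₁)) = log T(C(f₂))`. -/
theorem torsion_cone_comp_isometry_left (N : ℕ) (X1 X2 X3 : FinComplex N)
    (f1 : ∀ q, X1.C q →ₗ[ℂ] X2.C q) (f2 : ∀ q, X2.C q →ₗ[ℂ] X3.C q)
    (hm1 : IsMorphism X1 X2 f1) (hm2 : IsMorphism X2 X3 f2)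
    (hbij1 : ∀ q, Function.Bijective (f1 q))
    (hiso1 : ∀ q (x : X1.C q), ‖f1 q x‖ = ‖x‖)
    (hq2 : InducesCohomologyIso X2 X3 f2)
    (Z2 Z : FinComplex (N + 1))
    (hZ2 : ConeIso X2 X3 f2 Z2)
    (hZ : ConeIso X1 X3 (fun q => (f2 q).comp (f1 q)) Z) :
    Z2.Acyclic ∧ Z.Acyclic ∧ Z.logT = Z2.logT := by
  have hZ2ac : Z2.Acyclic := cone_acyclic X2 X3 f2 hm2 hq2 Z2 hZ2
  let F1 : ∀ q, X1.C q ≃ₗᵢ[ℂ] X2.C q := fun q => isoOfBij (f1 q) (hbij1 q) (hiso1 q)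
  let g : ∀ q, Z.C q ≃ₗᵢ[ℂ] Z2.C q := fun q =>
    match q with
    | 0 => hZ.e0.symm.trans ((F1 0).trans hZ2.e0)
    | (q + 1) => (hZ.e q).symm.trans ((prodIso (F1 (q + 1))).trans (hZ2.e q))
  have hg : ∀ q (z : Z.C q), g (q + 1) (Z.d q z) = Z2.d q (g q z) := by
    intro q z
    match q with
    | 0 =>
      have hz' : z = hZ.e0 (hZ.e0.symm z) := (hZ.e0.apply_symm_apply z).symm
      set u := hZ.e0.symm z with hu
      rw [hz', hZ.compat0 u]
      show (hZ2.e 0) ((prodIso (F1 1))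
          ((hZ.e 0).symm ((hZ.e 0) ((WithLp.equiv 2 (X3.C 0 × X1.C 1)).symm
            ((f2 0).comp (f1 0) u, X1.d 0 u))))) =
        Z2.d 0 (hZ2.e0 ((F1 0) (hZ.e0.symm ((hZ.e0) u))))
      rw [(hZ.e 0).symm_apply_apply, hZ.e0.symm_apply_apply, prodIso_pair]
      have : (F1 0) u = f1 0 u := rfl
      rw [this, hZ2.compat0 (f1 0 u)]
      have h2 : (F1 1) (X1.d 0 u) = X2.d 0 (f1 0 u) := by
        rw [isoOfBij_apply]; exact hm1 0 u
      rw [h2]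
      rfl
    | (q + 1) =>
      have hz' : z = hZ.e q ((hZ.e q).symm z) := ((hZ.e q).apply_symm_apply z).symm
      set p := (hZ.e q).symm z with hp
      set v : X3.C q := ((WithLp.equiv 2 (X3.C q × X1.C (q + 1))) p).1 with hv
      set u : X1.C (q + 1) := ((WithLp.equiv 2 (X3.C q × X1.C (q + 1))) p).2 with hup
      have hpp : p = (WithLp.equiv 2 (X3.C q × X1.C (q + 1))).symm (v, u) := rfl
      rw [hz', hpp, hZ.compat q v u]
      show (hZ2.e (q + 1)) ((prodIso (F1 (q + 2)))
          ((hZ.e (q + 1)).symm ((hZ.e (q + 1)) ((WithLp.equiv 2 (X3.C (q + 1) × X1.C (q + 2))).symm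
            (-(X3.d q v) + (f2 (q + 1)).comp (f1 (q + 1)) u, X1.d (q + 1) u))))) =
        Z2.d (q + 1) ((hZ2.e q) ((prodIso (F1 (q + 1)))
          ((hZ.e q).symm ((hZ.e q) ((WithLp.equiv 2 (X3.C q × X1.C (q + 1))).symm (v, u))))))
      rw [(hZ.e (q + 1)).symm_apply_apply, (hZ.e q).symm_apply_apply, prodIso_pair, prodIso_pair]
      have h1 : (F1 (q + 1)) u = f1 (q + 1) u := rfl
      rw [h1, hZ2.compat q v (f1 (q + 1) u)]
      have h2 : (F1 (q + 2)) (X1.d (q + 1) u) = X2.d (q + 1) (f1 (q + 1) u) := by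
        rw [isoOfBij_apply]; exact hm1 (q + 1) u
      rw [h2]
      rfl
  have hg' : ∀ q (y : Z2.C q), (g (q + 1)).symm (Z2.d q y) = Z.d q ((g q).symm y) := by
    intro q y
    have h := hg q ((g q).symm y)
    rw [(g q).apply_symm_apply] at h
    rw [← h, (g (q + 1)).symm_apply_apply]
  exact ⟨hZ2ac, transfer_acyclic Z2 Z (fun q => (g q).symm) hg' hZ2ac,
    transfer_logT Z Z2 g hg⟩
end
end

section
/- Let C¹, C², C³ be cochain complexes of finite-dimensional complex inner product spaces, let f₁ : C¹ → C² be a morphism of complexes inducing an isomorphism in cohomology, and let f₂ : C² → C³ be an isomorphism of complexes such that each f_{2,i} is a linear isometry of C²_i onto C³_i. Then the mapping cones C(f₁) and C(f₂ ∘ f₁) are acyclic and T(C(f₂ ∘ f₁)) = T(C(f₁)). -/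
noncomputable section

open LinearMap

open LinearMap



lemma pairZero {α γ : Type} [NormedAddCommGroup α] [InnerProductSpace ℂ α]
    [NormedAddCommGroup γ] [InnerProductSpace ℂ γ] {a : α} {b : γ}
    (h : (WithLp.equiv 2 (α × γ)).symm (a, b) = 0) : a = 0 ∧ b = 0 :=
  Prod.mk_inj.mp (congrArg (WithLp.equiv 2 (α × γ)) h)

lemma adj_conj_aux {E F E' F' : Type} [NormedAddCommGroup E] [InnerProductSpace ℂ E]
    [FiniteDimensional ℂ E] [NormedAddCommGroup F] [InnerProductSpace ℂ F]
    [FiniteDimensional ℂ F] [NormedAddCommGroup E'] [InnerProductSpace ℂ E']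
    [FiniteDimensional ℂ E'] [NormedAddCommGroup F'] [InnerProductSpace ℂ F']
    [FiniteDimensional ℂ F'] (e : E ≃ₗᵢ[ℂ] F) (e' : E' ≃ₗᵢ[ℂ] F')
    (A : E →ₗ[ℂ] E') (B : F →ₗ[ℂ] F') (h : ∀ x, B (e x) = e' (A x)) (y : F') :
    LinearMap.adjoint B y = e (LinearMap.adjoint A (e'.symm y)) := by
  have : (e.toLinearEquiv.toLinearMap ∘ₗ (LinearMap.adjoint A) ∘ₗ e'.symm.toLinearEquiv.toLinearMap)
      = LinearMap.adjoint B := by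
    rw [LinearMap.eq_adjoint_iff]
    intro x y
    simp only [LinearMap.comp_apply, LinearEquiv.coe_coe, LinearIsometryEquiv.coe_toLinearEquiv]
    calc inner ℂ (e (LinearMap.adjoint A (e'.symm x))) y
        = inner ℂ (e (LinearMap.adjoint A (e'.symm x))) (e (e.symm y)) := by simp
      _ = inner ℂ (LinearMap.adjoint A (e'.symm x)) (e.symm y) := e.inner_map_map _ _
      _ = inner ℂ ((e'.symm x) : E') (A (e.symm y)) := by
          rw [LinearMap.adjoint_inner_left]
      _ = inner ℂ (e' (e'.symm x)) (e' (A (e.symm y))) := (e'.inner_map_map _ _).symm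
      _ = inner ℂ x (B y) := by rw [e'.apply_symm_apply, ← h, e.apply_symm_apply]
  rw [← this]; rfl

def prodIsoL2 {α β γ : Type} [NormedAddCommGroup α] [InnerProductSpace ℂ α]
    [NormedAddCommGroup β] [InnerProductSpace ℂ β]
    [NormedAddCommGroup γ] [InnerProductSpace ℂ γ]
    (e : α ≃ₗᵢ[ℂ] β) : WithLp 2 (α × γ) ≃ₗᵢ[ℂ] WithLp 2 (β × γ) where
  toLinearEquiv := (WithLp.linearEquiv 2 ℂ (α × γ)).trans
    ((e.toLinearEquiv.prodCongr (LinearEquiv.refl ℂ γ)).trans (WithLp.linearEquiv 2 ℂ (β × γ)).symm)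
  norm_map' := by
    intro x
    rw [WithLp.prod_norm_eq_of_L2, WithLp.prod_norm_eq_of_L2]
    simp only [LinearEquiv.trans_apply, WithLp.linearEquiv_apply, WithLp.linearEquiv_symm_apply]
    congr 2
    · exact congrArg (· ^ 2) (e.norm_map _)

lemma prodIsoL2_apply {α β γ : Type} [NormedAddCommGroup α] [InnerProductSpace ℂ α]
    [NormedAddCommGroup β] [InnerProductSpace ℂ β]
    [NormedAddCommGroup γ] [InnerProductSpace ℂ γ]
    (e : α ≃ₗᵢ[ℂ] β) (v : α) (u : γ) :
    prodIsoL2 (γ := γ) e ((WithLp.equiv 2 (α × γ)).symm (v, u)) =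
      (WithLp.equiv 2 (β × γ)).symm (e v, u) := rfl



open FinComplex in
theorem cone_acyclic_aux {N : ℕ} {X Y : FinComplex N} {f : ∀ q, X.C q →ₗ[ℂ] Y.C q}
    (hm : IsMorphism X Y f) (hq : InducesCohomologyIso X Y f)
    {Z : FinComplex (N + 1)} (hZ : ConeIso X Y f Z) : Z.Acyclic := by
  obtain ⟨hq0, hqs0, hqinj, hqsurj⟩ := hq
  constructor
  · -- ker d_0 = ⊥
    rw [Submodule.eq_bot_iff]
    intro z hz
    rw [LinearMap.mem_ker] at hz
    set u := hZ.e0.symm z with hu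
    have hz' : z = hZ.e0 u := (hZ.e0.apply_symm_apply z).symm
    rw [hz', hZ.compat0 u, LinearIsometryEquiv.map_eq_zero_iff] at hz
    obtain ⟨h1, h2⟩ := pairZero hz
    rw [hz', hq0 u h2 h1, map_zero]
  · intro q
    apply le_antisymm
    · -- ker ≤ range
      intro z hz
      rw [LinearMap.mem_ker] at hz
      rw [LinearMap.mem_range]
      obtain _ | q' := q
      · set w := (hZ.e 0).symm z with hw
        have hz' : z = hZ.e 0 ((WithLp.equiv 2 (Y.C 0 × X.C 1)).symm (w.fst, w.snd)) :=
          ((hZ.e 0).apply_symm_apply z).symm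
        set v := w.fst
        set u := w.snd
        rw [hz', hZ.compat 0 v u, LinearIsometryEquiv.map_eq_zero_iff] at hz
        obtain ⟨h1, h2⟩ := pairZero hz
        have hfu : Y.d 0 v = f 1 u := by
          have := congrArg (fun t => t + Y.d 0 v) h1
          simpa [add_comm] using this.symm
        obtain ⟨t, ht⟩ := hqinj 0 u h2 ⟨v, hfu⟩
        have hy : Y.d 0 (v - f 0 t) = 0 := by
          rw [map_sub, ← hm 0 t, ht, hfu, sub_self]
        obtain ⟨x0, hx0d, hx0f⟩ := hqs0 (v - f 0 t) hy
        refine ⟨hZ.e0 (t + x0), ?_⟩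
        rw [hZ.compat0, hz']
        congr 1
        have hc1 : f 0 (t + x0) = v := by rw [map_add, hx0f]; abel
        have hc2 : X.d 0 (t + x0) = u := by rw [map_add, hx0d, add_zero, ht]
        rw [hc1, hc2]
      · set w := (hZ.e (q' + 1)).symm z with hw
        have hz' : z = hZ.e (q' + 1)
            ((WithLp.equiv 2 (Y.C (q' + 1) × X.C (q' + 2))).symm (w.fst, w.snd)) :=
          ((hZ.e (q' + 1)).apply_symm_apply z).symm
        set v := w.fst
        set u := w.snd
        rw [hz', hZ.compat (q' + 1) v u, LinearIsometryEquiv.map_eq_zero_iff] at hz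
        obtain ⟨h1, h2⟩ := pairZero hz
        have hfu : Y.d (q' + 1) v = f (q' + 2) u := by
          have := congrArg (fun t => t + Y.d (q' + 1) v) h1
          simpa [add_comm] using this.symm
        obtain ⟨t, ht⟩ := hqinj (q' + 1) u h2 ⟨v, hfu⟩
        have hy : Y.d (q' + 1) (v - f (q' + 1) t) = 0 := by
          rw [map_sub, ← hm (q' + 1) t, ht, hfu, sub_self]
        obtain ⟨x0, hx0d, wb, hwb⟩ := hqsurj q' (v - f (q' + 1) t) hy
        refine ⟨hZ.e q' ((WithLp.equiv 2 (Y.C q' × X.C (q' + 1))).symm (-wb, t + x0)), ?_⟩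
        rw [hZ.compat q' (-wb) (t + x0), hz']
        congr 1
        have hc1 : -(Y.d q' (-wb)) + f (q' + 1) (t + x0) = v := by
          rw [map_neg, neg_neg, ← hwb, map_add]
          abel
        have hc2 : X.d (q' + 1) (t + x0) = u := by rw [map_add, hx0d, add_zero, ht]
        rw [hc1, hc2]
    · -- range ≤ ker
      rintro _ ⟨x, rfl⟩
      rw [LinearMap.mem_ker]
      exact DFunLike.congr_fun (Z.dd q) x

open FinComplex in
theorem comp_cohomology_iso_aux {N : ℕ} {X1 X2 X3 : FinComplex N}
    {f1 : ∀ q, X1.C q →ₗ[ℂ] X2.C q} {f2 : ∀ q, X2.C q →ₗ[ℂ] X3.C q}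
    (hm1 : IsMorphism X1 X2 f1) (hm2 : IsMorphism X2 X3 f2)
    (hq1 : InducesCohomologyIso X1 X2 f1)
    (hbij2 : ∀ q, Function.Bijective (f2 q)) :
    InducesCohomologyIso X1 X3 (fun q => (f2 q).comp (f1 q)) := by
  obtain ⟨hq0, hqs0, hqinj, hqsurj⟩ := hq1
  refine ⟨?_, ?_, ?_, ?_⟩
  · intro x hd hf
    exact hq0 x hd ((hbij2 0).injective (by simpa using hf))
  · intro y hy
    obtain ⟨y', rfl⟩ := (hbij2 0).surjective y
    have hdy' : X2.d 0 y' = 0 := by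
      apply (hbij2 1).injective
      rw [hm2 0 y', hy, map_zero]
    obtain ⟨x, hxd, hxf⟩ := hqs0 y' hdy'
    exact ⟨x, hxd, by simp [hxf]⟩
  · intro q x hx ⟨v, hv⟩
    obtain ⟨v', rfl⟩ := (hbij2 q).surjective v
    refine hqinj q x hx ⟨v', ?_⟩
    apply (hbij2 (q + 1)).injective
    rw [hm2 q v', hv]
    rfl
  · intro q y hy
    obtain ⟨y', rfl⟩ := (hbij2 (q + 1)).surjective y
    have hdy' : X2.d (q + 1) y' = 0 := by
      apply (hbij2 (q + 2)).injective
      rw [hm2 (q + 1) y', hy, map_zero]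
    obtain ⟨x, hxd, v, hv⟩ := hqsurj q y' hdy'
    refine ⟨x, hxd, f2 q v, ?_⟩
    have : f2 (q + 1) (y' - f1 (q + 1) x) = f2 (q + 1) (X2.d q v) := by rw [hv]
    rw [map_sub, hm2 q v] at this
    simpa using this

open FinComplex in
/-- The degreewise isometry between the two cones. -/
def torsionAuxG {N : ℕ} {X1 X2 X3 : FinComplex N}
    {f1 : ∀ q, X1.C q →ₗ[ℂ] X2.C q} {f13 : ∀ q, X1.C q →ₗ[ℂ] X3.C q}
    (F2 : ∀ q, X2.C q ≃ₗᵢ[ℂ] X3.C q) {Z1 Z : FinComplex (N + 1)}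
    (hZ1 : ConeIso X1 X2 f1 Z1) (hZ : ConeIso X1 X3 f13 Z) :
    ∀ k, Z1.C k ≃ₗᵢ[ℂ] Z.C k
  | 0 => hZ1.e0.symm.trans hZ.e0
  | (q + 1) => (hZ1.e q).symm.trans ((prodIsoL2 (F2 q)).trans (hZ.e q))

open FinComplex in
/-- **Proposition 1.16 (ii) of [BFK, "Relative torsion"]** (finite-dimensional case
`𝒜 = ℂ`).  If `f₁ : C¹ → C²` is a morphism of cochain complexes of finite-dimensional
complex inner product spaces inducing an isomorphism in cohomology and `f₂ : C² → C³` is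
an isometric isomorphism of complexes, then the mapping cones `C(f₁)` and `C(f₂ ∘ f₁)` are
acyclic and `T(C(f₂ ∘ f₁)) = T(C(f₁))`, i.e. `log T(C(f₂ ∘ f₁)) = log T(C(f₁))`. -/
theorem torsion_cone_comp_isometry_right (N : ℕ) (X1 X2 X3 : FinComplex N)
    (f1 : ∀ q, X1.C q →ₗ[ℂ] X2.C q) (f2 : ∀ q, X2.C q →ₗ[ℂ] X3.C q)
    (hm1 : IsMorphism X1 X2 f1) (hm2 : IsMorphism X2 X3 f2)
    (hq1 : InducesCohomologyIso X1 X2 f1)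
    (hbij2 : ∀ q, Function.Bijective (f2 q))
    (hiso2 : ∀ q (x : X2.C q), ‖f2 q x‖ = ‖x‖)
    (Z1 Z : FinComplex (N + 1))
    (hZ1 : ConeIso X1 X2 f1 Z1)
    (hZ : ConeIso X1 X3 (fun q => (f2 q).comp (f1 q)) Z) :
    Z1.Acyclic ∧ Z.Acyclic ∧ Z.logT = Z1.logT := by
  have hm12 : IsMorphism X1 X3 (fun q => (f2 q).comp (f1 q)) := by
    intro q x
    simp only [LinearMap.comp_apply]
    rw [hm1 q x, hm2 q (f1 q x)]
  refine ⟨cone_acyclic_aux hm1 hq1 hZ1,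
    cone_acyclic_aux hm12 (comp_cohomology_iso_aux hm1 hm2 hq1 hbij2) hZ, ?_⟩
  set F2 : ∀ q, X2.C q ≃ₗᵢ[ℂ] X3.C q := fun q =>
    ⟨LinearEquiv.ofBijective (f2 q) (hbij2 q), hiso2 q⟩ with hF2
  set g := torsionAuxG F2 hZ1 hZ with hgdef
  have hg0 : ∀ u, g 0 (hZ1.e0 u) = hZ.e0 u := by
    intro u
    show (hZ1.e0.symm.trans hZ.e0) (hZ1.e0 u) = _
    rw [LinearIsometryEquiv.trans_apply, hZ1.e0.symm_apply_apply]
  have hgs : ∀ q (v : X2.C q) (u : X1.C (q + 1)),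
      g (q + 1) (hZ1.e q ((WithLp.equiv 2 (X2.C q × X1.C (q + 1))).symm (v, u))) =
        hZ.e q ((WithLp.equiv 2 (X3.C q × X1.C (q + 1))).symm (f2 q v, u)) := by
    intro q v u
    show ((hZ1.e q).symm.trans ((prodIsoL2 (F2 q)).trans (hZ.e q))) _ = _
    rw [LinearIsometryEquiv.trans_apply, (hZ1.e q).symm_apply_apply,
      LinearIsometryEquiv.trans_apply, prodIsoL2_apply]
    rfl
  have hd : ∀ k (x : Z1.C k), Z.d k (g k x) = g (k + 1) (Z1.d k x) := by
    intro k x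
    match k with
    | 0 =>
      have hx : x = hZ1.e0 (hZ1.e0.symm x) := (hZ1.e0.apply_symm_apply x).symm
      set u := hZ1.e0.symm x
      rw [hx, hg0 u, hZ.compat0 u, hZ1.compat0 u, hgs 0 (f1 0 u) (X1.d 0 u)]
      rfl
    | (q + 1) =>
      have hx : x = hZ1.e q ((WithLp.equiv 2 (X2.C q × X1.C (q + 1))).symm
          (((hZ1.e q).symm x).fst, ((hZ1.e q).symm x).snd)) :=
        ((hZ1.e q).apply_symm_apply x).symm
      set v := ((hZ1.e q).symm x).fst
      set u := ((hZ1.e q).symm x).snd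
      rw [hx, hgs q v u, hZ.compat q (f2 q v) u, hZ1.compat q v u,
        hgs (q + 1) (-(X2.d q v) + f1 (q + 1) u) (X1.d (q + 1) u)]
      congr 2
      rw [map_add, map_neg, hm2 q v]
      rfl
  have hadj : ∀ k (y : Z.C (k + 1)),
      LinearMap.adjoint (Z.d k) y = g k (LinearMap.adjoint (Z1.d k) ((g (k + 1)).symm y)) :=
    fun k => adj_conj_aux (g k) (g (k + 1)) (Z1.d k) (Z.d k) (hd k)
  have hlap : ∀ k (x : Z1.C k), Z.lap k (g k x) = g k (Z1.lap k x) := by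
    intro k x
    match k with
    | 0 =>
      show LinearMap.adjoint (Z.d 0) (Z.d 0 (g 0 x)) =
        g 0 (LinearMap.adjoint (Z1.d 0) (Z1.d 0 x))
      rw [hd 0 x, hadj 0, (g 1).symm_apply_apply]
    | (q + 1) =>
      show LinearMap.adjoint (Z.d (q + 1)) (Z.d (q + 1) (g (q + 1) x)) +
          Z.d q (LinearMap.adjoint (Z.d q) (g (q + 1) x)) =
        g (q + 1) (LinearMap.adjoint (Z1.d (q + 1)) (Z1.d (q + 1) x) +
          Z1.d q (LinearMap.adjoint (Z1.d q) x))
      rw [map_add]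
      congr 1
      · rw [hd (q + 1) x, hadj (q + 1), (g (q + 2)).symm_apply_apply]
      · rw [hadj q, (g (q + 1)).symm_apply_apply, hd q]
  have hdet : ∀ k, LinearMap.det (Z.lap k) = LinearMap.det (Z1.lap k) := by
    intro k
    have heq : Z.lap k = ((g k).toLinearEquiv : Z1.C k →ₗ[ℂ] Z.C k) ∘ₗ Z1.lap k ∘ₗ
        ((g k).toLinearEquiv.symm : Z.C k →ₗ[ℂ] Z1.C k) := by
      ext y
      simp only [LinearMap.comp_apply, LinearEquiv.coe_coe, LinearIsometryEquiv.coe_toLinearEquiv]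
      conv_lhs => rw [← (g k).apply_symm_apply y]
      exact hlap k _
    rw [heq, LinearMap.det_conj]
  simp only [FinComplex.logT]
  congr 1
  exact Finset.sum_congr rfl fun q _ => by rw [hdet q]
end
end

section
/- Let V be a finite-dimensional complex inner product space and let φ : V → V be a nonnegative selfadjoint linear operator. Define θ(t) := Tr(e^{−tφ}) − dim ker φ for t > 0. Then the function ζ(s) := (1/Γ(s)) ∫_0^1 t^{s−1} θ(t) dt converges and is holomorphic on the half-plane Re s > 0, admits a holomorphic continuation to the half-plane Re s > −1, and the value of this continuation at s = 0 equals dim V − dim ker φ (the rank of φ). -/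
open MeasureTheory Set

/-- **Formula (1.7) / Proposition 1.5 (B) of [BFK, "Relative torsion"]** in the
finite-dimensional case `𝒜 = ℂ`.  For a nonnegative selfadjoint operator `φ` on a
finite-dimensional complex inner product space, with
`θ(t) = Tr(e^{-tφ}) - dim ker φ`, the partial zeta function
`ζ(s) = Γ(s)⁻¹ ∫_0^1 t^(s-1) θ(t) dt` converges and is holomorphic on `Re s > 0`, and
admits a holomorphic continuation to `Re s > -1` whose value at `s = 0` is
`dim V - dim ker φ` (the rank of `φ`). -/
theorem partial_zeta_of_positive_operator {V : Type} [NormedAddCommGroup V]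
    [InnerProductSpace ℂ V] [FiniteDimensional ℂ V]
    (φ : V →L[ℂ] V) (hφ : φ.IsPositive)
    (θ : ℝ → ℝ)
    (hθ : ∀ t : ℝ, (θ t : ℂ) =
      LinearMap.trace ℂ V (NormedSpace.exp ((-(t : ℂ)) • φ)).toLinearMap -
        (Module.finrank ℂ (LinearMap.ker (φ : V →ₗ[ℂ] V)) : ℂ))
    (ζ : ℂ → ℂ)
    (hζ : ∀ s : ℂ, ζ s =
      (Complex.Gamma s)⁻¹ * ∫ t in Ioc (0 : ℝ) 1, (t : ℂ) ^ (s - 1) * (θ t : ℂ)) :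
    (∀ s : ℂ, 0 < s.re →
      IntegrableOn (fun t : ℝ => (t : ℂ) ^ (s - 1) * (θ t : ℂ)) (Ioc 0 1) volume) ∧
    DifferentiableOn ℂ ζ {s : ℂ | 0 < s.re} ∧
    ∃ Ξ : ℂ → ℂ, DifferentiableOn ℂ Ξ {s : ℂ | -1 < s.re} ∧
      (∀ s : ℂ, 0 < s.re → Ξ s = ζ s) ∧
      Ξ 0 = (Module.finrank ℂ V : ℂ) -
        (Module.finrank ℂ (LinearMap.ker (φ : V →ₗ[ℂ] V)) : ℂ) := by
  classical
  set k : ℂ := (Module.finrank ℂ (LinearMap.ker (φ : V →ₗ[ℂ] V)) : ℂ) with hk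
  set B : V →L[ℂ] V := -φ with hB
  set T : (V →L[ℂ] V) →ₗ[ℂ] ℂ :=
    (LinearMap.trace ℂ V).comp (ContinuousLinearMap.coeLM ℂ) with hT
  set Tc : (V →L[ℂ] V) →L[ℂ] ℂ := LinearMap.toContinuousLinearMap T with hTc
  -- the entire function `F` and its restriction `g` to the reals
  set F : ℂ → ℂ := fun z => Tc (NormedSpace.exp (z • B)) - k with hF
  set g : ℝ → ℂ := fun t => F t with hg
  have hFd : ∀ z : ℂ, HasDerivAt F (Tc (NormedSpace.exp (z • B) * B)) z := fun z =>
    (Tc.hasFDerivAt.comp_hasDerivAt z (hasDerivAt_exp_smul_const B z)).sub_const k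
  have hgd : ∀ t : ℝ, HasDerivAt g (Tc (NormedSpace.exp ((t : ℂ) • B) * B)) t := fun t =>
    (hFd t).comp_ofReal
  have hgθ : ∀ t : ℝ, (θ t : ℂ) = g t := by
    intro t
    have h1 : (-(t : ℂ)) • φ = (t : ℂ) • B := by simp [hB]
    simp only [hθ t, h1, hg, hF, hTc, hT]
    simp [LinearMap.coe_toContinuousLinearMap']
  have hgc : Continuous g := by
    have : Continuous fun t : ℝ => (t : ℂ) • B :=
      Complex.continuous_ofReal.smul continuous_const
    exact (Tc.continuous.comp ((continuous_iff_continuousAt.2 fun x => (NormedSpace.exp_analytic (𝕂 := ℂ) x).continuousAt).comp this)).sub continuous_const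
  have hθc : Continuous fun t : ℝ => (θ t : ℂ) := by
    have : (fun t : ℝ => (θ t : ℂ)) = g := funext hgθ
    rw [this]; exact hgc
  -- Lipschitz bound near 0
  have hg'c : Continuous fun t : ℝ => Tc (NormedSpace.exp ((t : ℂ) • B) * B) := by
    have : Continuous fun t : ℝ => (t : ℂ) • B :=
      Complex.continuous_ofReal.smul continuous_const
    exact Tc.continuous.comp (((continuous_iff_continuousAt.2 fun x => (NormedSpace.exp_analytic (𝕂 := ℂ) x).continuousAt).comp this).mul continuous_const)
  obtain ⟨C, hC⟩ := isCompact_Icc.exists_bound_of_continuousOn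
    (s := Icc (0 : ℝ) 1) hg'c.continuousOn
  have hC0 : 0 ≤ C := le_trans (norm_nonneg _) (hC 0 ⟨le_refl _, zero_le_one⟩)
  have hLip : ∀ t ∈ Icc (0 : ℝ) 1, ‖g t - g 0‖ ≤ C * t := by
    intro t ht
    have := (convex_Icc (0 : ℝ) 1).norm_image_sub_le_of_norm_hasDerivWithin_le
      (f := g) (f' := fun t => Tc (NormedSpace.exp ((t : ℂ) • B) * B))
      (fun x _ => (hgd x).hasDerivWithinAt) hC (left_mem_Icc.mpr zero_le_one) ht
    simpa [Real.norm_eq_abs, abs_of_nonneg ht.1] using this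
  obtain ⟨M, hM⟩ := isCompact_Icc.exists_bound_of_continuousOn
    (s := Icc (0 : ℝ) 1) hgc.continuousOn
  -- the indicator functions
  set f0 : ℝ → ℂ := (Ioc (0 : ℝ) 1).indicator (fun t => (θ t : ℂ)) with hf0
  set f1 : ℝ → ℂ := (Ioc (0 : ℝ) 1).indicator (fun t => (θ t : ℂ) - g 0) with hf1
  have hInt0 : Integrable f0 volume := by
    refine IntegrableOn.integrable_indicator ?_ measurableSet_Ioc
    exact (hθc.integrableOn_Icc (a := 0) (b := 1)).mono_set Ioc_subset_Icc_self
  have hInt1 : Integrable f1 volume := by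
    refine IntegrableOn.integrable_indicator ?_ measurableSet_Ioc
    exact (((hθc.sub continuous_const).integrableOn_Icc (a := 0) (b := 1)).mono_set
      Ioc_subset_Icc_self)
  have hloc0 : LocallyIntegrableOn f0 (Ioi 0) volume :=
    hInt0.locallyIntegrable.locallyIntegrableOn _
  have hloc1 : LocallyIntegrableOn f1 (Ioi 0) volume :=
    hInt1.locallyIntegrable.locallyIntegrableOn _
  -- big-O at infinity (the functions vanish beyond 1)
  have htop : ∀ (h : ℝ → ℂ) (a : ℝ),
      (Ioc (0 : ℝ) 1).indicator h =O[Filter.atTop] (· ^ (-a)) := by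
    intro h a
    have hev : (Ioc (0 : ℝ) 1).indicator h =ᶠ[Filter.atTop] (fun _ => (0 : ℂ)) := by
      filter_upwards [Filter.eventually_ge_atTop (2 : ℝ)] with t ht
      exact indicator_of_notMem (by simp only [mem_Ioc, not_and, not_le]; intro _; linarith) _
    exact Asymptotics.IsBigO.congr' (Asymptotics.isBigO_zero _ _) hev.symm
      Filter.EventuallyEq.rfl
  -- big-O at 0
  have hbot0 : f0 =O[nhdsWithin 0 (Ioi 0)] (· ^ (-(0 : ℝ))) := by
    rw [Asymptotics.isBigO_iff]
    refine ⟨M, ?_⟩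
    filter_upwards [Ioo_mem_nhdsGT_of_mem (Set.left_mem_Ico.mpr zero_lt_one)] with t ht
    have ht' : t ∈ Ioc (0 : ℝ) 1 := ⟨ht.1, le_of_lt ht.2⟩
    rw [hf0, indicator_of_mem ht', hgθ t]
    simpa [Real.rpow_zero] using hM t ⟨le_of_lt ht.1, le_of_lt ht.2⟩
  have hbot1 : f1 =O[nhdsWithin 0 (Ioi 0)] (· ^ (-(-1) : ℝ)) := by
    rw [Asymptotics.isBigO_iff]
    refine ⟨C, ?_⟩
    filter_upwards [Ioo_mem_nhdsGT_of_mem (Set.left_mem_Ico.mpr zero_lt_one)] with t ht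
    have ht' : t ∈ Ioc (0 : ℝ) 1 := ⟨ht.1, le_of_lt ht.2⟩
    rw [hf1, indicator_of_mem ht', hgθ t]
    have := hLip t ⟨le_of_lt ht.1, le_of_lt ht.2⟩
    simpa [Real.rpow_one, Real.norm_eq_abs, abs_of_nonneg (le_of_lt ht.1)] using this
  -- the key rewriting of Mellin transforms of indicator functions
  have key : ∀ (h : ℝ → ℂ) (s : ℂ),
      mellin ((Ioc (0 : ℝ) 1).indicator h) s
        = ∫ t in Ioc (0 : ℝ) 1, (t : ℂ) ^ (s - 1) * h t := by
    intro h s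
    have h1 : (fun t : ℝ => (t : ℂ) ^ (s - 1) • (Ioc (0 : ℝ) 1).indicator h t)
        = (Ioc (0 : ℝ) 1).indicator (fun t => (t : ℂ) ^ (s - 1) * h t) := by
      funext t
      by_cases ht : t ∈ Ioc (0 : ℝ) 1
      · simp [indicator_of_mem ht, smul_eq_mul]
      · simp [indicator_of_notMem ht]
    rw [mellin, h1, setIntegral_indicator measurableSet_Ioc,
      inter_eq_self_of_subset_right Ioc_subset_Ioi_self]
  -- Part 1: convergence
  have part1 : ∀ s : ℂ, 0 < s.re →
      IntegrableOn (fun t : ℝ => (t : ℂ) ^ (s - 1) * (θ t : ℂ)) (Ioc 0 1) volume := by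
    intro s hs
    have hconv : MellinConvergent f0 s :=
      mellinConvergent_of_isBigO_rpow hloc0 (htop _ (s.re + 1)) (lt_add_one _) hbot0 hs
    have := (hconv.mono_set Ioc_subset_Ioi_self : IntegrableOn _ (Ioc (0:ℝ) 1) volume)
    refine this.congr_fun ?_ measurableSet_Ioc
    intro t ht
    simp only [hf0, indicator_of_mem ht, smul_eq_mul]
  refine ⟨part1, ?_, ?_⟩
  -- Part 2: holomorphy on `0 < re s`
  · have hW : DifferentiableOn ℂ
        (fun s : ℂ => (Complex.Gamma s)⁻¹ * mellin f0 s) {s : ℂ | 0 < s.re} := by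
      intro s hs
      refine DifferentiableAt.differentiableWithinAt ?_
      exact (Complex.differentiable_one_div_Gamma s).mul
        (mellin_differentiableAt_of_isBigO_rpow hloc0 (htop _ (s.re + 1)) (lt_add_one _)
          hbot0 hs)
    refine hW.congr fun s _ => ?_
    rw [hζ s, key]
  -- Part 3: continuation
  · set r : ℂ := g 0 with hr
    refine ⟨fun s => r * (Complex.Gamma (s + 1))⁻¹ + (Complex.Gamma s)⁻¹ * mellin f1 s,
      ?_, ?_, ?_⟩
    · intro s hs
      refine DifferentiableAt.differentiableWithinAt ?_
      refine DifferentiableAt.add ?_ ?_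
      · exact ((Complex.differentiable_one_div_Gamma.comp
          (differentiable_id.add_const 1)) s).const_mul r
      · exact (Complex.differentiable_one_div_Gamma s).mul
          (mellin_differentiableAt_of_isBigO_rpow hloc1 (htop _ (s.re + 1)) (lt_add_one _)
            hbot1 hs)
    · intro s hs
      have hs0 : s ≠ 0 := fun h => by simp [h] at hs
      -- value of the power integral
      have hpow : (∫ t in Ioc (0 : ℝ) 1, (t : ℂ) ^ (s - 1)) = s⁻¹ := by
        rw [← intervalIntegral.integral_of_le zero_le_one]
        rw [integral_cpow (Or.inl (by simp [Complex.sub_re]; linarith))]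
        simp [sub_add_cancel, Complex.zero_cpow hs0]
      have hintpow : IntegrableOn (fun t : ℝ => (t : ℂ) ^ (s - 1)) (Ioc 0 1) volume :=
        (intervalIntegral.intervalIntegrable_cpow'
          (r := s - 1) (by simp [Complex.sub_re]; linarith)).1
      have hIθ := part1 s hs
      -- split the integral
      have hsplit : (∫ t in Ioc (0 : ℝ) 1, (t : ℂ) ^ (s - 1) * (θ t : ℂ))
          = (∫ t in Ioc (0 : ℝ) 1, (t : ℂ) ^ (s - 1) * ((θ t : ℂ) - r)) + r * s⁻¹ := by
        have h2 : (∫ t in Ioc (0 : ℝ) 1, (t : ℂ) ^ (s - 1) * ((θ t : ℂ) - r))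
            = (∫ t in Ioc (0 : ℝ) 1, (t : ℂ) ^ (s - 1) * (θ t : ℂ))
              - ∫ t in Ioc (0 : ℝ) 1, (t : ℂ) ^ (s - 1) * r := by
          rw [← integral_sub hIθ (hintpow.mul_const r)]
          congr 1; funext t; ring
        rw [h2, integral_mul_const, hpow]
        ring
      simp only [hζ s, hsplit, hf1, key]
      rw [Complex.Gamma_add_one s hs0, mul_inv]
      ring
    · have hr' : r = (Module.finrank ℂ V : ℂ) - k := by
        rw [hr, hg]
        simp only [hF, Complex.ofReal_zero, zero_smul, NormedSpace.exp_zero, hTc, hT]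
        simp [LinearMap.coe_toContinuousLinearMap', ContinuousLinearMap.one_def,
          ContinuousLinearMap.coe_id, LinearMap.trace_id]
      simp [Complex.Gamma_one, Complex.Gamma_zero, hr']
end
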